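/- arXiv:2509.14529 — 4 statements merged into one kernel-verified Lean document; each statement's English description precedes it below -/
import Mathlib

section
/- Construction of one-dimensional rough paths from renormalisation terms (forward direction of Proposition 4.1): Let T > 0, α ∈ (0,1], k := ⌊1/α⌋. Let X : [0,T] → ℝ and G^2, …, G^k : [0,T] → ℝ be functions for which there are constants C_X, C_2, …, C_k with |X_t − X_s| ≤ C_X·(t−s)^α and |G^m_t − G^m_s| ≤ C_m·(t−s)^{mα} for all 0 ≤ s ≤ t ≤ T and m = 2, …, k. Define 𝕏^n_{s,t} := P_n^{(k)}(X_t − X_s, G^2_t − G^2_s, …, G^k_t − G^k_s) for 0 ≤ s ≤ t ≤ T and n = 0, …, k. Then: (i) 𝕏^0 ≡ 1 and Chen's relation 𝕏^n_{s,t} = ∑_{j=0}^{n} 𝕏^j_{s,u} · 𝕏^{n−j}_{u,t} holds for all 0 ≤ s ≤ u ≤ t ≤ T and n = 0, …, k; (ii) there is a constant C (depending only on k, α, T, C_X, C_2, …, C_k) such that |𝕏^n_{s,t}| ≤ C·(t−s)^{nα} for all 0 ≤ s ≤ t ≤ T and n = 1, …, k. In particular (𝕏^n)_{n ≤ k} is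 a one-dimensional α-Hölder rough path on [0,T]. -/
open Finset

/-- The `n`-th complete Bell polynomial of degree `k`. -/
noncomputable def bellP (k n : ℕ) (a : Fin k → ℝ) : ℝ :=
  ∑ p ∈ (Fintype.piFinset fun _ : Fin k => Finset.range (n + 1)).filter
      (fun p => ∑ m : Fin k, ((m : ℕ) + 1) * p m = n),
    ∏ m : Fin k, a m ^ p m / (Nat.factorial (p m) : ℝ)

lemma entry_le_weight {k : ℕ} (p : Fin k → ℕ) (i : Fin k) :
    p i ≤ ∑ m : Fin k, ((m : ℕ) + 1) * p m :=
  le_trans (Nat.le_mul_of_pos_left (p i) (Nat.succ_pos (i : ℕ)))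
    (Finset.single_le_sum (f := fun m : Fin k => ((m : ℕ) + 1) * p m)
      (fun _ _ => Nat.zero_le _) (Finset.mem_univ i))

lemma bellP_eq_sum (k j n : ℕ) (hj : j ≤ n) (a : Fin k → ℝ) :
    bellP k j a = ∑ p ∈ (Fintype.piFinset fun _ : Fin k => Finset.range (n + 1)).filter
      (fun p => ∑ m : Fin k, ((m : ℕ) + 1) * p m = j),
    ∏ m : Fin k, a m ^ p m / (Nat.factorial (p m) : ℝ) := by
  unfold bellP
  apply Finset.sum_congr _ (fun _ _ => rfl)
  ext p
  simp only [Finset.mem_filter, Fintype.mem_piFinset, Finset.mem_range]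
  constructor
  · rintro ⟨h1, h2⟩; exact ⟨fun i => lt_of_lt_of_le (h1 i) (by omega), h2⟩
  · rintro ⟨h1, h2⟩
    refine ⟨fun i => ?_, h2⟩
    have := entry_le_weight p i
    omega

lemma add_pow_div (x y : ℝ) (p : ℕ) :
    (x + y) ^ p / (Nat.factorial p : ℝ) =
      ∑ c ∈ Finset.range (p + 1), (x ^ c / (Nat.factorial c : ℝ)) *
        (y ^ (p - c) / (Nat.factorial (p - c) : ℝ)) := by
  rw [add_pow, Finset.sum_div]
  refine Finset.sum_congr rfl fun c hc => ?_
  have hcp : c ≤ p := Nat.lt_succ_iff.mp (Finset.mem_range.mp hc)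
  have h := Nat.choose_mul_factorial_mul_factorial hcp
  have hc0 : (Nat.factorial c : ℝ) ≠ 0 := Nat.cast_ne_zero.mpr (Nat.factorial_ne_zero c)
  have hc1 : (Nat.factorial (p - c) : ℝ) ≠ 0 := Nat.cast_ne_zero.mpr (Nat.factorial_ne_zero _)
  have hc2 : (Nat.factorial p : ℝ) ≠ 0 := Nat.cast_ne_zero.mpr (Nat.factorial_ne_zero p)
  have h' : ((p.choose c : ℝ)) * (Nat.factorial c : ℝ) * (Nat.factorial (p - c) : ℝ)
      = (Nat.factorial p : ℝ) := by exact_mod_cast congrArg (Nat.cast : ℕ → ℝ) h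
  field_simp
  linear_combination (x ^ c * y ^ (p - c)) * h'

lemma bellP_add (k n : ℕ) (a b : Fin k → ℝ) :
    bellP k n (fun i => a i + b i) =
      ∑ j ∈ Finset.range (n + 1), bellP k j a * bellP k (n - j) b := by
  classical
  set P : Finset (Fin k → ℕ) := Fintype.piFinset fun _ : Fin k => Finset.range (n + 1) with hP
  set w : (Fin k → ℕ) → ℕ := fun p => ∑ m : Fin k, ((m : ℕ) + 1) * p m with hw
  have hwadd : ∀ q r : Fin k → ℕ, w (fun i => q i + r i) = w q + w r := by
    intro q r
    simp only [hw, Nat.mul_add]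
    exact Finset.sum_add_distrib
  -- RHS as a sum over a filtered product set
  have hR : ∑ x ∈ (P ×ˢ P).filter (fun x => w x.1 + w x.2 = n),
        ((∏ m : Fin k, a m ^ x.1 m / (Nat.factorial (x.1 m) : ℝ)) *
         (∏ m : Fin k, b m ^ x.2 m / (Nat.factorial (x.2 m) : ℝ)))
      = ∑ j ∈ Finset.range (n + 1), bellP k j a * bellP k (n - j) b := by
    rw [← Finset.sum_fiberwise_of_maps_to (g := fun x => w x.1)
      (t := Finset.range (n + 1)) (fun x hx => by
        have h := (Finset.mem_filter.mp hx).2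
        refine Finset.mem_range.mpr ?_
        show w x.1 < n + 1
        omega)]
    refine Finset.sum_congr rfl fun j hj => ?_
    have hjn : j ≤ n := Nat.lt_succ_iff.mp (Finset.mem_range.mp hj)
    rw [bellP_eq_sum k j n hjn a, bellP_eq_sum k (n - j) n (Nat.sub_le n j) b,
      Finset.sum_mul_sum, ← Finset.sum_product']
    apply Finset.sum_congr _ (fun _ _ => rfl)
    ext x
    simp only [Finset.mem_filter, Finset.mem_product]
    simp only [hw]
    constructor
    · rintro ⟨⟨⟨h1, h2⟩, h3⟩, h4⟩
      exact ⟨⟨h1, h4⟩, h2, by omega⟩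
    · rintro ⟨⟨h1, h4⟩, h2, h5⟩
      exact ⟨⟨⟨h1, h2⟩, by omega⟩, h4⟩
  rw [← hR]
  -- LHS: expand the binomials
  unfold bellP
  have hexp : ∀ p ∈ P.filter (fun p => w p = n),
      (∏ m : Fin k, (a m + b m) ^ p m / (Nat.factorial (p m) : ℝ))
        = ∑ c ∈ P.filter (fun c => ∀ i, c i ≤ p i),
            ∏ m : Fin k, ((a m ^ c m / (Nat.factorial (c m) : ℝ)) *
              (b m ^ (p m - c m) / (Nat.factorial (p m - c m) : ℝ))) := by
    intro p hp
    simp only [Finset.mem_filter] at hp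
    calc (∏ m : Fin k, (a m + b m) ^ p m / (Nat.factorial (p m) : ℝ))
        = ∏ m : Fin k, ∑ c ∈ Finset.range (p m + 1),
            (a m ^ c / (Nat.factorial c : ℝ)) *
              (b m ^ (p m - c) / (Nat.factorial (p m - c) : ℝ)) :=
          Finset.prod_congr rfl fun m _ => add_pow_div _ _ _
      _ = ∑ c ∈ Fintype.piFinset (fun m : Fin k => Finset.range (p m + 1)),
            ∏ m : Fin k, ((a m ^ c m / (Nat.factorial (c m) : ℝ)) *
              (b m ^ (p m - c m) / (Nat.factorial (p m - c m) : ℝ))) :=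
          Finset.prod_univ_sum _ _
      _ = _ := by
          apply Finset.sum_congr _ (fun _ _ => rfl)
          ext c
          simp only [Fintype.mem_piFinset, Finset.mem_range, Finset.mem_filter,
            Nat.lt_succ_iff, hP]
          constructor
          · intro h
            refine ⟨fun i => ?_, h⟩
            have h1 : p i ≤ n := by
              have := Fintype.mem_piFinset.mp hp.1 i
              simp only [Finset.mem_range, Nat.lt_succ_iff] at this
              exact this
            exact le_trans (h i) h1
          · exact fun h => h.2
  rw [Finset.sum_congr rfl hexp, Finset.sum_sigma']
  refine Finset.sum_nbij' (i := fun x => (x.2, fun i => x.1 i - x.2 i))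
    (j := fun y => ⟨fun i => y.1 i + y.2 i, y.1⟩) ?_ ?_ ?_ ?_ ?_
  · rintro ⟨p, c⟩ hx
    simp only [Finset.mem_sigma, Finset.mem_filter, Fintype.mem_piFinset,
      Finset.mem_range, Nat.lt_succ_iff, Finset.mem_product, hP] at hx ⊢
    obtain ⟨⟨hpP, hpw⟩, hcP, hcle⟩ := hx
    refine ⟨⟨hcP, fun i => le_trans (Nat.sub_le _ _) (hpP i)⟩, ?_⟩
    have : w (fun i => c i + (p i - c i)) = w c + w (fun i => p i - c i) := hwadd _ _
    have hpc : (fun i => c i + (p i - c i)) = p := by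
      funext i; have := hcle i; omega
    rw [hpc] at this
    omega
  · rintro ⟨q, r⟩ hy
    simp only [Finset.mem_filter, Finset.mem_product, Finset.mem_sigma,
      Fintype.mem_piFinset, Finset.mem_range, Nat.lt_succ_iff, hP] at hy ⊢
    obtain ⟨⟨hqP, hrP⟩, hsum⟩ := hy
    refine ⟨⟨fun i => ?_, ?_⟩, hqP, fun i => Nat.le_add_right _ _⟩
    · have h1 : q i ≤ w q := entry_le_weight q i
      have h2 : r i ≤ w r := entry_le_weight r i
      omega
    · rw [hwadd q r]; omega
  · rintro ⟨p, c⟩ hx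
    simp only [Finset.mem_sigma, Finset.mem_filter] at hx
    obtain ⟨-, -, hcle⟩ := hx
    have : (fun i => c i + (p i - c i)) = p := by
      funext i; have := hcle i; omega
    simp only [this]
  · rintro ⟨q, r⟩ _
    simp only [Nat.add_sub_cancel_left]
  · rintro ⟨p, c⟩ _
    simp only []
    rw [← Finset.prod_mul_distrib]

lemma bellP_nonneg (k n : ℕ) (D : Fin k → ℝ) (hD : ∀ i, 0 ≤ D i) :
    0 ≤ bellP k n D := by
  refine Finset.sum_nonneg fun p _ => Finset.prod_nonneg fun m _ =>
    div_nonneg (pow_nonneg (hD m) _) (Nat.cast_nonneg _)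

lemma bellP_bound (k n : ℕ) (a D : Fin k → ℝ) (y : ℝ) (hy : 0 ≤ y)
    (hD : ∀ i, 0 ≤ D i)
    (h : ∀ i : Fin k, |a i| ≤ D i * y ^ ((i : ℕ) + 1)) :
    |bellP k n a| ≤ bellP k n D * y ^ n := by
  unfold bellP
  rw [Finset.sum_mul]
  refine le_trans (Finset.abs_sum_le_sum_abs _ _) (Finset.sum_le_sum fun p hp => ?_)
  have hpw : ∑ m : Fin k, ((m : ℕ) + 1) * p m = n := (Finset.mem_filter.mp hp).2
  calc |∏ m : Fin k, a m ^ p m / (Nat.factorial (p m) : ℝ)|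
      = ∏ m : Fin k, |a m| ^ p m / (Nat.factorial (p m) : ℝ) := by
        rw [Finset.abs_prod]
        refine Finset.prod_congr rfl fun m _ => ?_
        rw [abs_div, abs_pow, Nat.abs_cast]
    _ ≤ ∏ m : Fin k, (D m * y ^ ((m : ℕ) + 1)) ^ p m / (Nat.factorial (p m) : ℝ) := by
        refine Finset.prod_le_prod (fun m _ => by positivity) fun m _ => ?_
        have hb := pow_le_pow_left₀ (abs_nonneg (a m)) (h m) (p m)
        exact div_le_div_of_nonneg_right hb (by positivity)
    _ = (∏ m : Fin k, D m ^ p m / (Nat.factorial (p m) : ℝ)) * y ^ n := by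
        rw [← hpw, ← Finset.prod_pow_eq_pow_sum, ← Finset.prod_mul_distrib]
        refine Finset.prod_congr rfl fun m _ => ?_
        rw [mul_pow, ← pow_mul]
        ring


lemma bellP_zero (k : ℕ) (a : Fin k → ℝ) : bellP k 0 a = 1 := by
  simp [bellP, Finset.filter_true_of_mem, Fintype.mem_piFinset]

/-- construction of one-dimensional rough paths from a path `X` and
renormalisation terms `G^2,…,G^k` via complete Bell polynomials: the family
`𝕏^n_{s,t} := P_n^{(k)}(X_{s,t}, G²_{s,t}, …, G^k_{s,t})` satisfies `𝕏^0 ≡ 1`,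
Chen's relation, and the graded Hölder bounds, i.e. it is a one-dimensional
`α`-Hölder rough path on `[0,T]`. -/
theorem rough_path_from_renormalisation
    (T α : ℝ) (hT : 0 < T) (hα : 0 < α) (hα1 : α ≤ 1)
    (k : ℕ) (hk : k = ⌊1 / α⌋₊)
    (X : ℝ → ℝ) (G : ℕ → ℝ → ℝ) (CX : ℝ) (CG : ℕ → ℝ)
    (hX : ∀ s t : ℝ, 0 ≤ s → s ≤ t → t ≤ T → |X t - X s| ≤ CX * (t - s) ^ α)
    (hG : ∀ m, 2 ≤ m → m ≤ k → ∀ s t : ℝ, 0 ≤ s → s ≤ t → t ≤ T →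
      |G m t - G m s| ≤ CG m * (t - s) ^ ((m : ℝ) * α))
    (𝕏 : ℕ → ℝ → ℝ → ℝ)
    (h𝕏 : ∀ n, ∀ s t : ℝ, 𝕏 n s t = bellP k n (fun i : Fin k =>
      if (i : ℕ) = 0 then X t - X s else G ((i : ℕ) + 1) t - G ((i : ℕ) + 1) s)) :
    (∀ s t : ℝ, 0 ≤ s → s ≤ t → t ≤ T → 𝕏 0 s t = 1) ∧
    (∀ n, n ≤ k → ∀ s u t : ℝ, 0 ≤ s → s ≤ u → u ≤ t → t ≤ T →
      𝕏 n s t = ∑ j ∈ Finset.range (n + 1), 𝕏 j s u * 𝕏 (n - j) u t) ∧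
    (∃ C : ℝ, ∀ n, 1 ≤ n → n ≤ k → ∀ s t : ℝ, 0 ≤ s → s ≤ t → t ≤ T →
      |𝕏 n s t| ≤ C * (t - s) ^ ((n : ℝ) * α)) := by
  refine ⟨fun s t _ _ _ => by rw [h𝕏 0 s t]; exact bellP_zero k _, ?_, ?_⟩
  · intro n _ s u t _ _ _ _
    rw [h𝕏 n s t]
    have hsplit : (fun i : Fin k =>
        if (i : ℕ) = 0 then X t - X s else G ((i : ℕ) + 1) t - G ((i : ℕ) + 1) s)
      = fun i : Fin k =>
        (if (i : ℕ) = 0 then X u - X s else G ((i : ℕ) + 1) u - G ((i : ℕ) + 1) s)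
        + (if (i : ℕ) = 0 then X t - X u else G ((i : ℕ) + 1) t - G ((i : ℕ) + 1) u) := by
      funext i
      by_cases hi : (i : ℕ) = 0 <;> simp only [hi, if_pos, if_neg, if_true, if_false] <;>
        first | ring | (rw [if_neg hi, if_neg hi, if_neg hi]; ring)
    rw [hsplit, bellP_add]
    exact Finset.sum_congr rfl fun j _ => by rw [h𝕏 j s u, h𝕏 (n - j) u t]
  · set D : Fin k → ℝ := fun i =>
      if (i : ℕ) = 0 then |CX| else |CG ((i : ℕ) + 1)| with hD
    have hDpos : ∀ i, 0 ≤ D i := fun i => by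
      by_cases hi : (i : ℕ) = 0 <;> simp [hD, hi]
    refine ⟨∑ j ∈ Finset.range (k + 1), bellP k j D, ?_⟩
    intro n hn1 hnk s t hs hst htT
    have hts : (0:ℝ) ≤ t - s := by linarith
    set y : ℝ := (t - s) ^ α with hy
    have hy0 : 0 ≤ y := Real.rpow_nonneg hts α
    have hpow : ∀ m : ℕ, (t - s) ^ ((m : ℝ) * α) = y ^ m := by
      intro m
      rw [mul_comm, Real.rpow_mul hts, Real.rpow_natCast]
    have hbound : ∀ i : Fin k,
        |(if (i : ℕ) = 0 then X t - X s else G ((i : ℕ) + 1) t - G ((i : ℕ) + 1) s)|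
          ≤ D i * y ^ ((i : ℕ) + 1) := by
      intro i
      by_cases hi : (i : ℕ) = 0
      · rw [if_pos hi, hi]
        have hDi : D i = |CX| := by rw [hD]; simp [hi]
        rw [hDi]
        calc |X t - X s| ≤ CX * (t - s) ^ α := hX s t hs hst htT
          _ ≤ |CX| * y ^ (0 + 1) := by
              rw [pow_one]
              exact mul_le_mul_of_nonneg_right (le_abs_self CX) hy0
      · rw [if_neg hi]
        have hDi : D i = |CG ((i : ℕ) + 1)| := by rw [hD]; simp [hi]
        rw [hDi]
        have h2 : 2 ≤ (i : ℕ) + 1 := by omega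
        have hk2 : (i : ℕ) + 1 ≤ k := i.isLt
        calc |G ((i : ℕ) + 1) t - G ((i : ℕ) + 1) s|
            ≤ CG ((i : ℕ) + 1) * (t - s) ^ (((((i : ℕ) + 1) : ℕ) : ℝ) * α) :=
              hG _ h2 hk2 s t hs hst htT
          _ = CG ((i : ℕ) + 1) * y ^ ((i : ℕ) + 1) := by rw [hpow]
          _ ≤ |CG ((i : ℕ) + 1)| * y ^ ((i : ℕ) + 1) :=
              mul_le_mul_of_nonneg_right (le_abs_self _) (pow_nonneg hy0 _)
    rw [h𝕏 n s t, hpow n]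
    calc |bellP k n _| ≤ bellP k n D * y ^ n :=
          bellP_bound k n _ D y hy0 hDpos hbound
      _ ≤ (∑ j ∈ Finset.range (k + 1), bellP k j D) * y ^ n := by
          refine mul_le_mul_of_nonneg_right ?_ (pow_nonneg hy0 n)
          exact Finset.single_le_sum (fun j _ => bellP_nonneg k j D hDpos)
            (Finset.mem_range.mpr (by omega))
end

section
/- Markovian integrands are controlled paths (claim of Example 4.2): Let T > 0, α ∈ (0,1], k := ⌊1/α⌋. Let X : [0,T] → ℝ satisfy |X_t − X_s| ≤ C_X·(t−s)^α and let G^2, …, G^k : [0,T] → ℝ satisfy the strengthened regularity |G^m_t − G^m_s| ≤ C_G·(t−s)^{kα} for all 0 ≤ s ≤ t ≤ T and m = 2, …, k. Define 𝕏^n_{s,t} := P_n^{(k)}(X_t − X_s, G^2_t − G^2_s, …, G^k_t − G^k_s) for n = 0, …, k. Let f : [0,T] × ℝ → ℝ be such that the partial derivatives ∂_t^a ∂_x^i f exist and are continuous on [0,T] × ℝ for all a ∈ {0,1} and 0 ≤ i ≤ k, and set Y^{(i)}_t := ∂_x^{i−1} f(t, X_t) for i = 1, …, k. Then there is a constant C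 such that |Y^{(i)}_t − Y^{(i)}_s − ∑_{j=i+1}^{k} Y^{(j)}_s · 𝕏^{j−i}_{s,t}| ≤ C·(t−s)^{(k+1−i)α} for all 0 ≤ s ≤ t ≤ T and i = 1, …, k; that is, (Y^{(1)}, …, Y^{(k)}) is a controlled path with respect to (𝕏^n)_{n ≤ k}. -/
/-! The remainder of `Y^{(i)}` splits into three parts: the time increment
`∂ₓ^{i-1} f(t, X_t) - ∂ₓ^{i-1} f(s, X_t)`, of order `t - s`; the Taylor remainder of order
`n = k + 1 - i` of `∂ₓ^{i-1} f(s, ·)` between `X_s` and `X_t`, of order `|X_t - X_s|^n`; and the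
terms `Y^{(j)}_s (𝕏^{j-i}_{s,t} - (X_t - X_s)^{j-i} / (j-i)!)`. Every monomial of a Bell polynomial
other than the pure power of `X_t - X_s` contains an increment of some `G^m`, so the last terms are
of order `(t - s)^{kα}`. As `nα ≤ kα ≤ 1` and `t - s ≤ T`, all three parts are `O((t - s)^{nα})`. -/

open Finset

def HolderBound (T e : ℝ) (F : ℝ → ℝ → ℝ) : Prop :=
  ∃ C, 0 ≤ C ∧ ∀ s t, 0 ≤ s → s ≤ t → t ≤ T → |F s t| ≤ C * (t - s) ^ e

namespace HolderBound

variable {T e e' : ℝ} {F G : ℝ → ℝ → ℝ}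

theorem of_le (C : ℝ) (h : ∀ s t, 0 ≤ s → s ≤ t → t ≤ T → |F s t| ≤ C * (t - s) ^ e) :
    HolderBound T e F := by
  refine ⟨max C 0, le_max_right _ _, fun s t hs hst htT => (h s t hs hst htT).trans ?_⟩
  gcongr
  exact le_max_left _ _

theorem congr (hF : HolderBound T e F) (h : ∀ s t, F s t = G s t) : HolderBound T e G := by
  rwa [show G = F from funext fun s => funext fun t => (h s t).symm]

theorem of_abs_le_mul {M : ℝ} (hG : HolderBound T e G)
    (h : ∀ s t, 0 ≤ s → s ≤ t → t ≤ T → |F s t| ≤ M * |G s t|) : HolderBound T e F := by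
  obtain ⟨C, -, hC⟩ := hG
  refine of_le (|M| * C) fun s t hs hst htT => (h s t hs hst htT).trans ?_
  rw [mul_assoc]
  exact (mul_le_mul_of_nonneg_right (le_abs_self M) (abs_nonneg _)).trans
    (mul_le_mul_of_nonneg_left (hC s t hs hst htT) (abs_nonneg M))

theorem add (hF : HolderBound T e F) (hG : HolderBound T e G) :
    HolderBound T e (fun s t => F s t + G s t) := by
  obtain ⟨C, -, hC⟩ := hF
  obtain ⟨D, -, hD⟩ := hG
  refine of_le (C + D) fun s t hs hst htT => ?_
  rw [add_mul]
  exact (abs_add_le _ _).trans (add_le_add (hC s t hs hst htT) (hD s t hs hst htT))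

theorem sub (hF : HolderBound T e F) (hG : HolderBound T e G) :
    HolderBound T e (fun s t => F s t - G s t) := by
  obtain ⟨C, -, hC⟩ := hF
  obtain ⟨D, -, hD⟩ := hG
  refine of_le (C + D) fun s t hs hst htT => ?_
  rw [add_mul]
  exact (abs_sub _ _).trans (add_le_add (hC s t hs hst htT) (hD s t hs hst htT))

theorem zero : HolderBound T e (fun _ _ => 0) :=
  of_le 0 fun s t _ _ _ => by simp

theorem sum {ι : Type*} (I : Finset ι) {F : ι → ℝ → ℝ → ℝ} (h : ∀ i ∈ I, HolderBound T e (F i)) :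
    HolderBound T e (fun s t => ∑ i ∈ I, F i s t) := by
  classical
  induction I using Finset.induction_on with
  | empty => simpa using zero
  | insert i I hi ih =>
    simp only [sum_insert hi]
    exact (h i (mem_insert_self i I)).add (ih fun j hj => h j (mem_insert_of_mem hj))

theorem div_const (hF : HolderBound T e F) (c : ℝ) : HolderBound T e (fun s t => F s t / c) := by
  obtain ⟨C, -, hC⟩ := hF
  refine of_le (C / |c|) fun s t hs hst htT => ?_
  rw [abs_div, div_mul_eq_mul_div]
  exact div_le_div_of_nonneg_right (hC s t hs hst htT) (abs_nonneg c)

theorem mul (hF : HolderBound T e F) (hG : HolderBound T e' G) (he : 0 ≤ e) (he' : 0 ≤ e') :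
    HolderBound T (e + e') (fun s t => F s t * G s t) := by
  obtain ⟨C, hC0, hC⟩ := hF
  obtain ⟨D, -, hD⟩ := hG
  refine of_le (C * D) fun s t hs hst htT => ?_
  rw [abs_mul, Real.rpow_add_of_nonneg (sub_nonneg.2 hst) he he', mul_mul_mul_comm]
  exact mul_le_mul (hC s t hs hst htT) (hD s t hs hst htT) (abs_nonneg _)
    (mul_nonneg hC0 (Real.rpow_nonneg (sub_nonneg.2 hst) _))

theorem one : HolderBound T 0 (fun _ _ => 1) :=
  of_le 1 fun s t _ _ _ => by simp

theorem prod {ι : Type*} (I : Finset ι) {F : ι → ℝ → ℝ → ℝ} {e : ι → ℝ}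
    (h : ∀ i ∈ I, HolderBound T (e i) (F i)) (he : ∀ i ∈ I, 0 ≤ e i) :
    HolderBound T (∑ i ∈ I, e i) (fun s t => ∏ i ∈ I, F i s t) := by
  classical
  induction I using Finset.induction_on with
  | empty => simpa using one
  | insert i I hi ih =>
    simp only [prod_insert hi, sum_insert hi]
    exact (h i (mem_insert_self i I)).mul (ih (fun j hj => h j (mem_insert_of_mem hj))
      fun j hj => he j (mem_insert_of_mem hj)) (he i (mem_insert_self i I))
      (sum_nonneg fun j hj => he j (mem_insert_of_mem hj))

theorem pow (hF : HolderBound T e F) (he : 0 ≤ e) (n : ℕ) :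
    HolderBound T (n * e) (fun s t => F s t ^ n) := by
  simpa using prod (range n) (fun _ _ => hF) fun _ _ => he

theorem mono_exponent (hF : HolderBound T e F) (he' : 0 ≤ e') (h : e' ≤ e) :
    HolderBound T e' F := by
  obtain ⟨C, hC0, hC⟩ := hF
  refine of_le (C * |T| ^ (e - e')) fun s t hs hst htT => (hC s t hs hst htT).trans ?_
  have hΔ : 0 ≤ t - s := sub_nonneg.2 hst
  rw [mul_assoc, ← sub_add_cancel e e', Real.rpow_add_of_nonneg hΔ (sub_nonneg.2 h) he',
    add_sub_cancel_right]
  gcongr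
  linarith [le_abs_self T]

end HolderBound

def bellExponents (k n : ℕ) : Finset (Fin k → ℕ) :=
  (Fintype.piFinset fun _ : Fin k => range (n + 1)).filter
    fun p => ∑ m : Fin k, ((m : ℕ) + 1) * p m = n

section Bell

variable {k n : ℕ}

theorem single_mem_bellExponents (hk : 0 < k) : Pi.single ⟨0, hk⟩ n ∈ bellExponents k n := by
  simp only [bellExponents, mem_filter, Fintype.mem_piFinset, mem_range]
  refine ⟨fun m => ?_, ?_⟩
  · by_cases hm : m = ⟨0, hk⟩ <;> simp [hm]
  · rw [sum_eq_single ⟨0, hk⟩ (fun m _ hm => by simp [hm]) (by simp)]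
    simp

theorem exists_ne_zero_of_mem_bellExponents (hk : 0 < k) {p : Fin k → ℕ}
    (hp : p ∈ bellExponents k n) (hne : p ≠ Pi.single ⟨0, hk⟩ n) :
    ∃ m : Fin k, (m : ℕ) ≠ 0 ∧ p m ≠ 0 := by
  by_contra! h
  have hz : ∀ m : Fin k, m ≠ ⟨0, hk⟩ → p m = 0 := fun m hm => h m fun h0 => hm (Fin.ext h0)
  have hweight := (mem_filter.1 hp).2
  rw [sum_eq_single ⟨0, hk⟩ (fun m _ hm => by simp [hz m hm]) (by simp)] at hweight
  refine hne (funext fun m => ?_)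
  by_cases hm : m = ⟨0, hk⟩
  · subst hm; simpa using hweight
  · simp [hz m hm, hm]

theorem bellP_sub_pow_div_factorial (hk : 0 < k) (a : Fin k → ℝ) :
    bellP k n a - a ⟨0, hk⟩ ^ n / n.factorial =
      ∑ p ∈ (bellExponents k n).erase (Pi.single ⟨0, hk⟩ n),
        ∏ m : Fin k, a m ^ p m / (p m).factorial := by
  rw [bellP, ← bellExponents, ← add_sum_erase _ _ (single_mem_bellExponents hk),
    prod_eq_single ⟨0, hk⟩ (fun m _ hm => by simp [hm]) (by simp)]
  simp

theorem HolderBound.bellP_sub_pow_div_factorial (hk : 0 < k) {T e₀ e₁ : ℝ}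
    {a : Fin k → ℝ → ℝ → ℝ} (he₀ : 0 ≤ e₀) (he₁ : 0 ≤ e₁)
    (h₀ : HolderBound T e₀ (a ⟨0, hk⟩)) (h₁ : ∀ m : Fin k, (m : ℕ) ≠ 0 → HolderBound T e₁ (a m)) :
    HolderBound T e₁
      (fun s t => bellP k n (fun m => a m s t) - a ⟨0, hk⟩ s t ^ n / n.factorial) := by
  set e : Fin k → ℝ := fun m => if (m : ℕ) = 0 then e₀ else e₁
  have he : ∀ m, 0 ≤ e m := fun m => by dsimp only [e]; split_ifs <;> assumption
  have ha : ∀ m, HolderBound T (e m) (a m) := fun m => by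
    dsimp only [e]
    split_ifs with hm
    · exact (Fin.ext hm : m = ⟨0, hk⟩) ▸ h₀
    · exact h₁ m hm
  refine (HolderBound.sum _ fun p hp => ?_).congr fun s t =>
    (_root_.bellP_sub_pow_div_factorial hk _).symm
  obtain ⟨m, hm0, hpm⟩ :=
    exists_ne_zero_of_mem_bellExponents hk (mem_of_mem_erase hp) (ne_of_mem_erase hp)
  have hexp : e₁ ≤ ∑ m, (p m : ℝ) * e m := calc
    e₁ ≤ p m * e m := by
      simp only [e, hm0, if_false]
      exact le_mul_of_one_le_left he₁ (by exact_mod_cast Nat.one_le_iff_ne_zero.2 hpm)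
    _ ≤ ∑ m, (p m : ℝ) * e m :=
      single_le_sum (fun m _ => mul_nonneg (Nat.cast_nonneg _) (he m)) (mem_univ m)
  refine (HolderBound.prod _ (fun m _ => ((ha m).pow (he m) (p m)).div_const _)
    fun m _ => mul_nonneg (Nat.cast_nonneg _) (he m)).mono_exponent he₁ hexp

end Bell

theorem hasDerivAt_taylor_sum (c : ℕ → ℝ) (x₀ y : ℝ) (n : ℕ) :
    HasDerivAt (fun y => ∑ m ∈ range (n + 1), c m * (y - x₀) ^ m / m.factorial)
      (∑ m ∈ range n, c (m + 1) * (y - x₀) ^ m / m.factorial) y := by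
  simp only [sum_range_succ' _ n, pow_zero, mul_one, Nat.factorial_zero, Nat.cast_one, div_one]
  refine (HasDerivAt.fun_sum fun m _ => ?_).add_const _
  refine ((((hasDerivAt_id' y).sub_const x₀).fun_pow (m + 1)).const_mul (c (m + 1))).div_const
    ((m + 1).factorial : ℝ) |>.congr_deriv ?_
  rw [Nat.factorial_succ, Nat.add_sub_cancel]
  push_cast
  field_simp

theorem abs_sub_taylor_sum_le {g : ℕ → ℝ → ℝ} {x₀ x₁ M : ℝ} (n : ℕ)
    (hg : ∀ m < n, ∀ x, HasDerivAt (g m) (g (m + 1) x) x)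
    (hM : ∀ y ∈ Set.uIcc x₀ x₁, |g n y| ≤ M) :
    |g 0 x₁ - ∑ m ∈ range n, g m x₀ * (x₁ - x₀) ^ m / m.factorial| ≤ M * |x₁ - x₀| ^ n := by
  induction n generalizing g x₁ with
  | zero => simpa using hM x₁ Set.right_mem_uIcc
  | succ n ih =>
    set R : ℝ → ℝ := fun y => g 0 y - ∑ m ∈ range (n + 1), g m x₀ * (y - x₀) ^ m / m.factorial
    have hM0 : 0 ≤ M := (abs_nonneg _).trans (hM x₀ Set.left_mem_uIcc)
    -- `R` has as derivative the remainder of order `n` of `g 1`, bounded by the induction hypothesis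
    have hR : ∀ y, HasDerivAt R
        (g 1 y - ∑ m ∈ range n, g (m + 1) x₀ * (y - x₀) ^ m / m.factorial) y := fun y =>
      (hg 0 n.succ_pos y).sub (hasDerivAt_taylor_sum (fun m => g m x₀) x₀ y n)
    have hR' : ∀ y ∈ Set.uIcc x₀ x₁, ‖g 1 y - ∑ m ∈ range n, g (m + 1) x₀ * (y - x₀) ^ m /
        m.factorial‖ ≤ M * |x₁ - x₀| ^ n := fun y hy =>
      (ih (g := fun m => g (m + 1)) (fun m hm => hg (m + 1) (by omega))
        fun z hz => hM z (Set.uIcc_subset_uIcc_left hy hz)).trans <|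
        mul_le_mul_of_nonneg_left (pow_le_pow_left₀ (abs_nonneg _)
          (Set.abs_sub_left_of_mem_uIcc hy) n) hM0
    have hR₀ : R x₀ = 0 := by simp [R, sum_range_succ']
    have := Convex.norm_image_sub_le_of_norm_hasDerivWithin_le (fun y _ => (hR y).hasDerivWithinAt)
      hR' (convex_uIcc x₀ x₁) Set.left_mem_uIcc Set.right_mem_uIcc
    rwa [hR₀, sub_zero, Real.norm_eq_abs, Real.norm_eq_abs, mul_assoc, ← pow_succ] at this

section Path

variable {T e R : ℝ} {X : ℝ → ℝ}

theorem HolderBound.exists_abs_le (hX : HolderBound T e (fun s t => X t - X s)) (he : 0 ≤ e) :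
    ∃ R, ∀ u ∈ Set.Icc 0 T, |X u| ≤ R := by
  obtain ⟨C, hC0, hC⟩ := hX
  refine ⟨|X 0| + C * T ^ e, fun u ⟨hu0, huT⟩ => ?_⟩
  have h := hC 0 u le_rfl hu0 huT
  rw [sub_zero] at h
  have : C * u ^ e ≤ C * T ^ e := by gcongr
  linarith [abs_sub_abs_le_abs_sub (X u) (X 0)]

theorem exists_bound_of_continuousOn_prod_univ {K : Set ℝ} (hK : IsCompact K) {g : ℝ → ℝ → ℝ}
    (hg : ContinuousOn (fun p : ℝ × ℝ => g p.1 p.2) (K ×ˢ Set.univ)) (R : ℝ) :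
    ∃ M, ∀ u ∈ K, ∀ x, |x| ≤ R → |g u x| ≤ M := by
  obtain ⟨M, hM⟩ := (hK.prod isCompact_Icc).exists_bound_of_continuousOn
    (hg.mono (Set.prod_mono subset_rfl (Set.subset_univ (Set.Icc (-R) R))))
  exact ⟨M, fun u hu x hx => hM (u, x) ⟨hu, abs_le.1 hx⟩⟩

theorem holderBound_zero_of_continuousOn {g : ℝ → ℝ → ℝ}
    (hg : ContinuousOn (fun p : ℝ × ℝ => g p.1 p.2) (Set.Icc 0 T ×ˢ Set.univ))
    (hX : ∀ u ∈ Set.Icc 0 T, |X u| ≤ R) : HolderBound T 0 (fun s _ => g s (X s)) := by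
  obtain ⟨M, hM⟩ := exists_bound_of_continuousOn_prod_univ isCompact_Icc hg R
  exact .of_le M fun s t hs hst htT => by
    simpa using hM s ⟨hs, hst.trans htT⟩ _ (hX s ⟨hs, hst.trans htT⟩)

theorem holderBound_one_of_hasDerivWithinAt {g g' : ℝ → ℝ → ℝ}
    (hg : ∀ t ∈ Set.Icc 0 T, ∀ x, HasDerivWithinAt (fun u => g u x) (g' t x) (Set.Icc 0 T) t)
    (hg' : ContinuousOn (fun p : ℝ × ℝ => g' p.1 p.2) (Set.Icc 0 T ×ˢ Set.univ))
    (hX : ∀ u ∈ Set.Icc 0 T, |X u| ≤ R) : HolderBound T 1 (fun s t => g t (X t) - g s (X t)) := by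
  obtain ⟨M, hM⟩ := exists_bound_of_continuousOn_prod_univ isCompact_Icc hg' R
  have hincr : HolderBound T 1 (fun s t => t - s) :=
    .of_le 1 fun s t _ hst _ => by simp [abs_of_nonneg (sub_nonneg.2 hst)]
  refine hincr.of_abs_le_mul (M := M) fun s t hs hst htT => ?_
  have hsub : Set.Icc s t ⊆ Set.Icc 0 T := Set.Icc_subset_Icc hs htT
  simpa only [Real.norm_eq_abs] using Convex.norm_image_sub_le_of_norm_hasDerivWithin_le
    (fun u hu => (hg u (hsub hu) (X t)).mono hsub)
    (fun u hu => hM u (hsub hu) _ (hX t ⟨hs.trans hst, htT⟩)) (convex_Icc s t)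
    (Set.left_mem_Icc.2 hst) (Set.right_mem_Icc.2 hst)

theorem holderBound_taylor_remainder {g : ℕ → ℝ → ℝ → ℝ} (n : ℕ)
    (hg : ∀ m < n, ∀ t ∈ Set.Icc 0 T, ∀ x, HasDerivAt (g m t) (g (m + 1) t x) x)
    (hgn : ContinuousOn (fun p : ℝ × ℝ => g n p.1 p.2) (Set.Icc 0 T ×ˢ Set.univ))
    (hXR : ∀ u ∈ Set.Icc 0 T, |X u| ≤ R) (hX : HolderBound T e (fun s t => X t - X s))
    (he : 0 ≤ e) :
    HolderBound T (n * e) (fun s t =>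
      g 0 s (X t) - ∑ m ∈ range n, g m s (X s) * (X t - X s) ^ m / m.factorial) := by
  obtain ⟨M, hM⟩ := exists_bound_of_continuousOn_prod_univ isCompact_Icc hgn R
  refine (hX.pow he n).of_abs_le_mul (M := M) fun s t hs hst htT => ?_
  have hs' : s ∈ Set.Icc 0 T := ⟨hs, hst.trans htT⟩
  rw [abs_pow]
  refine abs_sub_taylor_sum_le n (fun m hm => hg m hm s hs') fun y hy => hM s hs' y ?_
  have hXs := abs_le.1 (hXR s hs')
  have hXt := abs_le.1 (hXR t ⟨hs.trans hst, htT⟩)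
  rcases Set.mem_uIcc.1 hy with ⟨h₁, h₂⟩ | ⟨h₁, h₂⟩ <;> exact abs_le.2 ⟨by linarith, by linarith⟩

end Path

theorem taylor_sum_eq_add_sum_Icc (c : ℕ → ℝ) (x : ℝ) {i k : ℕ} (hi : 1 ≤ i) (hik : i ≤ k) :
    ∑ m ∈ range (k + 1 - i), c (i - 1 + m) * x ^ m / m.factorial =
      c (i - 1) + ∑ j ∈ Icc (i + 1) k, c (j - 1) * (x ^ (j - i) / (j - i).factorial) := by
  let f := fun j => c (j - 1) * (x ^ (j - i) / (j - i).factorial)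
  calc _ = ∑ m ∈ range (k + 1 - i), f (i + m) := sum_congr rfl fun m _ => by
        simp only [f, show i + m - 1 = i - 1 + m by omega, Nat.add_sub_cancel_left, mul_div_assoc]
    _ = f i + ∑ j ∈ Icc (i + 1) k, f j := by
      rw [← sum_Ico_eq_sum_range, sum_eq_sum_Ico_succ_bot (by omega), Ico_add_one_right_eq_Icc]
    _ = _ := by simp [f]

theorem holderBound_bellP_increments_sub_pow {T α : ℝ} {k : ℕ} (hk : 0 < k) (hα : 0 ≤ α)
    {X : ℝ → ℝ} {G : ℕ → ℝ → ℝ} (hX : HolderBound T α (fun s t => X t - X s))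
    (hG : ∀ m, 2 ≤ m → m ≤ k → HolderBound T (k * α) (fun s t => G m t - G m s)) (n : ℕ) :
    HolderBound T (k * α) (fun s t => bellP k n (fun i : Fin k =>
      if (i : ℕ) = 0 then X t - X s else G ((i : ℕ) + 1) t - G ((i : ℕ) + 1) s) -
        (X t - X s) ^ n / n.factorial) :=
  HolderBound.bellP_sub_pow_div_factorial hk hα (by positivity) hX fun i hi => by
    simpa only [hi, if_false] using hG (i + 1) (by omega) (by omega)

theorem pos_of_floor_one_div_pos {α : ℝ} (h : 0 < ⌊1 / α⌋₊) : 0 < α :=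
  one_div_pos.1 (one_pos.trans_le (Nat.floor_pos.1 h))

theorem floor_one_div_mul_le_one {α : ℝ} (hα : 0 < α) : (⌊1 / α⌋₊ : ℝ) * α ≤ 1 :=
  (le_div_iff₀ hα).1 (by simpa using Nat.floor_le (one_div_pos.2 hα).le)

theorem HolderBound.exists_uniform {ι : Type*} (I : Finset ι) {T : ℝ} {e : ι → ℝ}
    {F : ι → ℝ → ℝ → ℝ} (h : ∀ i ∈ I, HolderBound T (e i) (F i)) :
    ∃ C, ∀ i ∈ I, ∀ s t, 0 ≤ s → s ≤ t → t ≤ T → |F i s t| ≤ C * (t - s) ^ e i := by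
  choose! C hC0 hC using h
  refine ⟨∑ i ∈ I, C i, fun i hi s t hs hst htT => (hC i hi s t hs hst htT).trans ?_⟩
  gcongr
  exact single_le_sum hC0 hi

/-- Here `fd i t x` stands for `∂ₓ^i f(t, x)` and `ft i t x` for `∂ₜ ∂ₓ^i f(t, x)`. -/
theorem markovian_integrand_controlled_general
    (T α : ℝ)
    (k : ℕ) (hk : k = ⌊1 / α⌋₊)
    (X : ℝ → ℝ) (G : ℕ → ℝ → ℝ) (CX CG : ℝ)
    (hX : ∀ s t : ℝ, 0 ≤ s → s ≤ t → t ≤ T → |X t - X s| ≤ CX * (t - s) ^ α)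
    (hG : ∀ m, 2 ≤ m → m ≤ k → ∀ s t : ℝ, 0 ≤ s → s ≤ t → t ≤ T →
      |G m t - G m s| ≤ CG * (t - s) ^ ((k : ℝ) * α))
    (𝕏 : ℕ → ℝ → ℝ → ℝ)
    (h𝕏 : ∀ n, ∀ s t : ℝ, 𝕏 n s t = bellP k n (fun i : Fin k =>
      if (i : ℕ) = 0 then X t - X s else G ((i : ℕ) + 1) t - G ((i : ℕ) + 1) s))
    (fd ft : ℕ → ℝ → ℝ → ℝ)
    -- the spatial derivatives ∂_x^i f, 0 ≤ i ≤ k, exist ...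
    (hx : ∀ i, i < k → ∀ t ∈ Set.Icc (0 : ℝ) T, ∀ x : ℝ,
      HasDerivAt (fun y => fd i t y) (fd (i + 1) t x) x)
    -- ... the time derivatives ∂_t ∂_x^i f, 0 ≤ i ≤ k, exist ...
    (ht : ∀ i, i ≤ k → ∀ t ∈ Set.Icc (0 : ℝ) T, ∀ x : ℝ,
      HasDerivWithinAt (fun u => fd i u x) (ft i t x) (Set.Icc 0 T) t)
    -- ... and all these partial derivatives are continuous on [0,T] × ℝ.
    (hcx : ∀ i, i ≤ k → ContinuousOn (fun p : ℝ × ℝ => fd i p.1 p.2)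
      (Set.Icc (0 : ℝ) T ×ˢ Set.univ))
    (hct : ∀ i, i ≤ k → ContinuousOn (fun p : ℝ × ℝ => ft i p.1 p.2)
      (Set.Icc (0 : ℝ) T ×ˢ Set.univ))
    (Y : ℕ → ℝ → ℝ) (hYdef : ∀ i, 1 ≤ i → i ≤ k → ∀ t : ℝ, Y i t = fd (i - 1) t (X t)) :
    ∃ C : ℝ, ∀ i, 1 ≤ i → i ≤ k → ∀ s t : ℝ, 0 ≤ s → s ≤ t → t ≤ T →
      |Y i t - Y i s - ∑ j ∈ Finset.Icc (i + 1) k, Y j s * 𝕏 (j - i) s t|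
        ≤ C * (t - s) ^ (((k + 1 - i : ℕ) : ℝ) * α) := by
  have hXα : HolderBound T α (fun s t => X t - X s) := .of_le CX hX
  suffices h : ∀ i ∈ Icc 1 k, HolderBound T (((k + 1 - i : ℕ) : ℝ) * α)
      (fun s t => Y i t - Y i s - ∑ j ∈ Icc (i + 1) k, Y j s * 𝕏 (j - i) s t) by
    obtain ⟨C, hC⟩ := HolderBound.exists_uniform _ h
    exact ⟨C, fun i hi1 hik => hC i (mem_Icc.2 ⟨hi1, hik⟩)⟩
  intro i hi
  obtain ⟨hi1, hik⟩ := mem_Icc.1 hi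
  have hα : 0 < α := pos_of_floor_one_div_pos (hk ▸ (by omega : 0 < k))
  have hkα : (k : ℝ) * α ≤ 1 := hk ▸ floor_one_div_mul_le_one hα
  obtain ⟨R, hR⟩ := hXα.exists_abs_le hα.le
  have hn₀ : 0 ≤ ((k + 1 - i : ℕ) : ℝ) * α := by positivity
  have hnk : ((k + 1 - i : ℕ) : ℝ) * α ≤ k * α := by
    gcongr; exact_mod_cast (by omega : k + 1 - i ≤ k)
  have hA := (holderBound_one_of_hasDerivWithinAt (ht (i - 1) (by omega)) (hct (i - 1) (by omega))
    hR).mono_exponent hn₀ (hnk.trans hkα)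
  have hB := holderBound_taylor_remainder (g := fun m => fd (i - 1 + m)) (k + 1 - i)
    (fun m hm => hx (i - 1 + m) (by omega))
    (by rw [show i - 1 + (k + 1 - i) = k by omega]; exact hcx k le_rfl)
    hR hXα hα.le
  have hD : ∀ j ∈ Icc (i + 1) k, HolderBound T ((k + 1 - i : ℕ) * α) (fun s t =>
      fd (j - 1) s (X s) * (𝕏 (j - i) s t - (X t - X s) ^ (j - i) / (j - i).factorial)) :=
    fun j hj => by
      simpa [← h𝕏] using (holderBound_zero_of_continuousOn (hcx (j - 1) (by grind)) hR).mul
        ((holderBound_bellP_increments_sub_pow (by omega) hα.le hXα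
          (fun m hm hmk => .of_le CG (hG m hm hmk)) (j - i)).mono_exponent hn₀ hnk) le_rfl hn₀
  refine ((hA.add hB).sub (HolderBound.sum _ hD)).congr fun s t => ?_
  have hY : ∑ j ∈ Icc (i + 1) k, Y j s * 𝕏 (j - i) s t =
      ∑ j ∈ Icc (i + 1) k, fd (j - 1) s (X s) * 𝕏 (j - i) s t :=
    sum_congr rfl fun j hj => by rw [hYdef j (by grind) (by grind)]
  rw [hYdef i hi1 hik, hYdef i hi1 hik, hY]
  simp only [add_zero, taylor_sum_eq_add_sum_Icc (fun j => fd j s (X s)) (X t - X s) hi1 hik,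
    mul_sub, sum_sub_distrib]
  ring

/-- Markovian integrands are controlled paths.  Here `fd i t x`
represents `∂_x^i f(t,x)` and `ft i t x` represents `∂_t ∂_x^i f(t,x)`; the
hypotheses say that these partial derivatives exist and are continuous on
`[0,T] × ℝ` for `0 ≤ i ≤ k`.  With `Y^{(i)}_t := ∂_x^{i-1} f(t, X_t)`, the tuple
`(Y^{(1)},…,Y^{(k)})` is a controlled path with respect to the rough path `𝕏`
built from `X` and the renormalisation terms `G^2,…,G^k` (of the strengthened
`kα`-Hölder regularity) via complete Bell polynomials. -/
theorem markovian_integrand_controlled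
    (T α : ℝ) (hT : 0 < T) (hα : 0 < α) (hα1 : α ≤ 1)
    (k : ℕ) (hk : k = ⌊1 / α⌋₊)
    (X : ℝ → ℝ) (G : ℕ → ℝ → ℝ) (CX CG : ℝ)
    (hX : ∀ s t : ℝ, 0 ≤ s → s ≤ t → t ≤ T → |X t - X s| ≤ CX * (t - s) ^ α)
    (hG : ∀ m, 2 ≤ m → m ≤ k → ∀ s t : ℝ, 0 ≤ s → s ≤ t → t ≤ T →
      |G m t - G m s| ≤ CG * (t - s) ^ ((k : ℝ) * α))
    (𝕏 : ℕ → ℝ → ℝ → ℝ)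
    (h𝕏 : ∀ n, ∀ s t : ℝ, 𝕏 n s t = bellP k n (fun i : Fin k =>
      if (i : ℕ) = 0 then X t - X s else G ((i : ℕ) + 1) t - G ((i : ℕ) + 1) s))
    (f : ℝ → ℝ → ℝ) (fd ft : ℕ → ℝ → ℝ → ℝ)
    (hfd0 : fd 0 = f)
    -- the spatial derivatives ∂_x^i f, 0 ≤ i ≤ k, exist ...
    (hx : ∀ i, i < k → ∀ t ∈ Set.Icc (0 : ℝ) T, ∀ x : ℝ,
      HasDerivAt (fun y => fd i t y) (fd (i + 1) t x) x)
    -- ... the time derivatives ∂_t ∂_x^i f, 0 ≤ i ≤ k, exist ...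
    (ht : ∀ i, i ≤ k → ∀ t ∈ Set.Icc (0 : ℝ) T, ∀ x : ℝ,
      HasDerivWithinAt (fun u => fd i u x) (ft i t x) (Set.Icc 0 T) t)
    -- ... and all these partial derivatives are continuous on [0,T] × ℝ.
    (hcx : ∀ i, i ≤ k → ContinuousOn (fun p : ℝ × ℝ => fd i p.1 p.2)
      (Set.Icc (0 : ℝ) T ×ˢ Set.univ))
    (hct : ∀ i, i ≤ k → ContinuousOn (fun p : ℝ × ℝ => ft i p.1 p.2)
      (Set.Icc (0 : ℝ) T ×ˢ Set.univ))
    (Y : ℕ → ℝ → ℝ) (hYdef : ∀ i, 1 ≤ i → i ≤ k → ∀ t : ℝ, Y i t = fd (i - 1) t (X t)) :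
    ∃ C : ℝ, ∀ i, 1 ≤ i → i ≤ k → ∀ s t : ℝ, 0 ≤ s → s ≤ t → t ≤ T →
      |Y i t - Y i s - ∑ j ∈ Finset.Icc (i + 1) k, Y j s * 𝕏 (j - i) s t|
        ≤ C * (t - s) ^ (((k + 1 - i : ℕ) : ℝ) * α) :=
  markovian_integrand_controlled_general T α k hk X G CX CG hX hG 𝕏 h𝕏 fd ft hx ht hcx hct Y hYdef
end

section
/- Coherence estimate for the local approximations (key step in the proof of Proposition 2.1, Appendix A.1): Let (𝕏^n)_{n ≤ k} be a one-dimensional α-Hölder rough path on [0,T] with constant C_𝕏 and let (Y^{(1)}, …, Y^{(k)}) be a controlled path with constant C_Y. Define Ξ_{s,t} := ∑_{i=1}^{k} Y^{(i)}_s · 𝕏^i_{s,t} for 0 ≤ s ≤ t ≤ T. Then there exists a constant C (depending only on k, α, T, C_𝕏 and C_Y) such that |Ξ_{s,t} − Ξ_{s,u} − Ξ_{u,t}| ≤ C·(t−s)^{(k+1)α} for all 0 ≤ s ≤ u ≤ t ≤ T; note that (k+1)α > 1 since k = ⌊1/α⌋. -/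
open Finset

/-- coherence estimate for the local approximations
`Ξ_{s,t} = ∑_{i=1}^{k} Y^{(i)}_s 𝕏^i_{s,t}` of the rough integral: there is a
constant `C` with `|Ξ_{s,t} − Ξ_{s,u} − Ξ_{u,t}| ≤ C (t−s)^{(k+1)α}` for all
`0 ≤ s ≤ u ≤ t ≤ T`. -/
theorem local_approximation_coherence
    (T α : ℝ) (hT : 0 < T) (hα : 0 < α) (hα1 : α ≤ 1)
    (k : ℕ) (hk : k = ⌊1 / α⌋₊)
    (𝕏 : ℕ → ℝ → ℝ → ℝ) (C𝕏 : ℝ)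
    (h0 : ∀ s t : ℝ, 0 ≤ s → s ≤ t → t ≤ T → 𝕏 0 s t = 1)
    (hChen : ∀ n, n ≤ k → ∀ s u t : ℝ, 0 ≤ s → s ≤ u → u ≤ t → t ≤ T →
      𝕏 n s t = ∑ j ∈ Finset.range (n + 1), 𝕏 j s u * 𝕏 (n - j) u t)
    (hHol : ∀ n, 1 ≤ n → n ≤ k → ∀ s t : ℝ, 0 ≤ s → s ≤ t → t ≤ T →
      |𝕏 n s t| ≤ C𝕏 * (t - s) ^ ((n : ℝ) * α))
    (Y : ℕ → ℝ → ℝ) (CY : ℝ)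
    (hY : ∀ i, 1 ≤ i → i ≤ k → ∀ s t : ℝ, 0 ≤ s → s ≤ t → t ≤ T →
      |Y i t - Y i s - ∑ j ∈ Finset.Icc (i + 1) k, Y j s * 𝕏 (j - i) s t|
        ≤ CY * (t - s) ^ (((k + 1 - i : ℕ) : ℝ) * α))
    (Ξ : ℝ → ℝ → ℝ)
    (hΞ : ∀ s t : ℝ, Ξ s t = ∑ i ∈ Finset.Icc 1 k, Y i s * 𝕏 i s t) :
    ∃ C : ℝ, ∀ s u t : ℝ, 0 ≤ s → s ≤ u → u ≤ t → t ≤ T →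
      |Ξ s t - Ξ s u - Ξ u t| ≤ C * (t - s) ^ (((k + 1 : ℕ) : ℝ) * α) := by
  have hk1 : 1 ≤ k := by
    rw [hk]
    exact Nat.le_floor (by rw [Nat.cast_one, le_div_iff₀ hα]; linarith)
  have hCY : 0 ≤ CY := by
    have h := hY 1 le_rfl hk1 0 T le_rfl hT.le le_rfl
    have hp : (0:ℝ) < (T - 0) ^ (((k + 1 - 1 : ℕ) : ℝ) * α) :=
      Real.rpow_pos_of_pos (by linarith) _
    nlinarith [abs_nonneg (Y 1 T - Y 1 0 - ∑ j ∈ Finset.Icc (1 + 1) k, Y j 0 * 𝕏 (j - 1) 0 T)]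
  have hCX : 0 ≤ C𝕏 := by
    have h := hHol 1 le_rfl hk1 0 T le_rfl hT.le le_rfl
    have hp : (0:ℝ) < (T - 0) ^ (((1:ℕ) : ℝ) * α) :=
      Real.rpow_pos_of_pos (by linarith) _
    nlinarith [abs_nonneg (𝕏 1 0 T)]
  refine ⟨k * (CY * C𝕏), ?_⟩
  intro s u t hs hsu hut htT
  have hu0 : 0 ≤ u := hs.trans hsu
  have hst : s ≤ t := hsu.trans hut
  have hsT : s ≤ T := hst.trans htT
  have huT : u ≤ T := hut.trans htT
  -- the key algebraic identity
  have key : Ξ s t - Ξ s u - Ξ u t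
      = -∑ m ∈ Icc 1 k,
          (Y m u - Y m s - ∑ l ∈ Icc (m + 1) k, Y l s * 𝕏 (l - m) s u) * 𝕏 m u t := by
    have e1 : ∀ i ∈ Icc 1 k,
        Y i s * 𝕏 i s t
          = Y i s * 𝕏 i s u + ∑ j ∈ range i, Y i s * (𝕏 j s u * 𝕏 (i - j) u t) := by
      intro i hi
      rw [hChen i (mem_Icc.mp hi).2 s u t hs hsu hut htT, Finset.sum_range_succ,
        Nat.sub_self, h0 u t hu0 hut htT, mul_one, mul_add, Finset.mul_sum]
      ring
    have e2 : ∑ i ∈ Icc 1 k, ∑ j ∈ range i, Y i s * (𝕏 j s u * 𝕏 (i - j) u t)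
        = ∑ m ∈ Icc 1 k, ∑ j ∈ range (k + 1 - m), Y (j + m) s * (𝕏 j s u * 𝕏 m u t) := by
      rw [Finset.sum_sigma', Finset.sum_sigma']
      refine Finset.sum_nbij' (fun p => ⟨p.1 - p.2, p.2⟩) (fun p => ⟨p.2 + p.1, p.2⟩)
        ?_ ?_ ?_ ?_ ?_
      · intro p hp
        simp only [Finset.mem_sigma, Finset.mem_Icc, Finset.mem_range] at hp ⊢
        omega
      · intro p hp
        simp only [Finset.mem_sigma, Finset.mem_Icc, Finset.mem_range] at hp ⊢
        omega
      · intro p hp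
        simp only [Finset.mem_sigma, Finset.mem_Icc, Finset.mem_range] at hp
        have : p.2 + (p.1 - p.2) = p.1 := by omega
        simp [this]
      · intro p hp
        simp only [Finset.mem_sigma, Finset.mem_Icc, Finset.mem_range] at hp
        have : p.2 + p.1 - p.2 = p.1 := by omega
        simp [this]
      · intro p hp
        simp only [Finset.mem_sigma, Finset.mem_Icc, Finset.mem_range] at hp
        have : p.2 + (p.1 - p.2) = p.1 := by omega
        simp [this]
    have e3 : ∀ m ∈ Icc 1 k,
        ∑ j ∈ range (k + 1 - m), Y (j + m) s * (𝕏 j s u * 𝕏 m u t)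
          = (Y m s + ∑ l ∈ Icc (m + 1) k, Y l s * 𝕏 (l - m) s u) * 𝕏 m u t := by
      intro m hm
      obtain ⟨hm1, hmk⟩ := mem_Icc.mp hm
      have hrange : k + 1 - m = (k - m) + 1 := by omega
      rw [hrange, Finset.sum_range_succ', ← Finset.Ico_add_one_right_eq_Icc, Finset.sum_Ico_eq_sum_range]
      have hr2 : k + 1 - (m + 1) = k - m := by omega
      rw [hr2, h0 s u hs hsu huT]
      have hS : ∑ j ∈ range (k - m), Y (j + 1 + m) s * (𝕏 (j + 1) s u * 𝕏 m u t)
          = (∑ j ∈ range (k - m), Y (m + 1 + j) s * 𝕏 (m + 1 + j - m) s u) * 𝕏 m u t := by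
        rw [Finset.sum_mul]
        refine Finset.sum_congr rfl fun j _ => ?_
        have h1 : j + 1 + m = m + 1 + j := by omega
        have h2 : m + 1 + j - m = j + 1 := by omega
        rw [h1, h2]; ring
      rw [hS]
      simp only [zero_add, one_mul]
      ring
    rw [hΞ s t, hΞ s u, hΞ u t, Finset.sum_congr rfl e1, Finset.sum_add_distrib, e2,
      Finset.sum_congr rfl e3]
    have hcomb : ∑ m ∈ Icc 1 k,
          (Y m s + ∑ l ∈ Icc (m + 1) k, Y l s * 𝕏 (l - m) s u) * 𝕏 m u t
        - ∑ m ∈ Icc 1 k, Y m u * 𝕏 m u t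
        = -∑ m ∈ Icc 1 k,
          (Y m u - Y m s - ∑ l ∈ Icc (m + 1) k, Y l s * 𝕏 (l - m) s u) * 𝕏 m u t := by
      rw [← Finset.sum_sub_distrib, ← Finset.sum_neg_distrib]
      exact Finset.sum_congr rfl fun m _ => by ring
    linarith [hcomb]
  rw [key, abs_neg]
  calc |∑ m ∈ Icc 1 k,
        (Y m u - Y m s - ∑ l ∈ Icc (m + 1) k, Y l s * 𝕏 (l - m) s u) * 𝕏 m u t|
      ≤ ∑ m ∈ Icc 1 k,
        |(Y m u - Y m s - ∑ l ∈ Icc (m + 1) k, Y l s * 𝕏 (l - m) s u) * 𝕏 m u t| :=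
        Finset.abs_sum_le_sum_abs _ _
    _ ≤ ∑ m ∈ Icc 1 k, CY * C𝕏 * (t - s) ^ (((k + 1 : ℕ) : ℝ) * α) := by
        refine Finset.sum_le_sum fun m hm => ?_
        obtain ⟨hm1, hmk⟩ := mem_Icc.mp hm
        have hD := hY m hm1 hmk s u hs hsu huT
        have hX := hHol m hm1 hmk u t hu0 hut htT
        rw [abs_mul]
        have h1 : |Y m u - Y m s - ∑ l ∈ Icc (m + 1) k, Y l s * 𝕏 (l - m) s u| * |𝕏 m u t|
            ≤ (CY * (u - s) ^ (((k + 1 - m : ℕ) : ℝ) * α)) * (C𝕏 * (t - u) ^ ((m : ℝ) * α)) :=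
          mul_le_mul hD hX (abs_nonneg _) ((abs_nonneg _).trans hD)
        refine h1.trans ?_
        have hus : (u - s) ^ (((k + 1 - m : ℕ) : ℝ) * α) ≤ (t - s) ^ (((k + 1 - m : ℕ) : ℝ) * α) :=
          Real.rpow_le_rpow (by linarith) (by linarith) (by positivity)
        have htu : (t - u) ^ ((m : ℝ) * α) ≤ (t - s) ^ ((m : ℝ) * α) :=
          Real.rpow_le_rpow (by linarith) (by linarith) (by positivity)
        have hcast : ((k + 1 - m : ℕ) : ℝ) = ((k + 1 : ℕ) : ℝ) - m := by
          have : m ≤ k + 1 := by omega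
          push_cast [Nat.cast_sub this]
          ring
        have hm0 : (0:ℝ) < (m : ℝ) := by exact_mod_cast hm1
        have hpq : ((k + 1 : ℕ) : ℝ) * α = ((k + 1 - m : ℕ) : ℝ) * α + (m : ℝ) * α := by
          rw [hcast]; ring
        have hsplit : (t - s) ^ (((k + 1 : ℕ) : ℝ) * α)
            = (t - s) ^ (((k + 1 - m : ℕ) : ℝ) * α) * (t - s) ^ ((m : ℝ) * α) := by
          rw [hpq, Real.rpow_add' (by linarith) (by rw [← hpq, hpq]; rw [← hpq]; positivity)]
        rw [hsplit]
        have hnn1 : (0:ℝ) ≤ (u - s) ^ (((k + 1 - m : ℕ) : ℝ) * α) :=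
          Real.rpow_nonneg (by linarith) _
        have hnn2 : (0:ℝ) ≤ (t - s) ^ (((k + 1 - m : ℕ) : ℝ) * α) :=
          Real.rpow_nonneg (by linarith) _
        have hnn3 : (0:ℝ) ≤ (t - u) ^ ((m : ℝ) * α) := Real.rpow_nonneg (by linarith) _
        have hnn4 : (0:ℝ) ≤ (t - s) ^ ((m : ℝ) * α) := Real.rpow_nonneg (by linarith) _
        calc CY * (u - s) ^ (((k + 1 - m : ℕ) : ℝ) * α) * (C𝕏 * (t - u) ^ ((m : ℝ) * α))
            ≤ CY * (t - s) ^ (((k + 1 - m : ℕ) : ℝ) * α) * (C𝕏 * (t - s) ^ ((m : ℝ) * α)) := by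
              apply mul_le_mul
              · exact mul_le_mul_of_nonneg_left hus hCY
              · exact mul_le_mul_of_nonneg_left htu hCX
              · positivity
              · positivity
          _ = CY * C𝕏 * ((t - s) ^ (((k + 1 - m : ℕ) : ℝ) * α) * (t - s) ^ ((m : ℝ) * α)) := by
              ring
    _ = ↑k * (CY * C𝕏) * (t - s) ^ (((k + 1 : ℕ) : ℝ) * α) := by
        rw [Finset.sum_const, Nat.card_Icc]
        simp [nsmul_eq_mul]
        ring
end

section
/- Sewing lemma (Lemma A.1): Let W be a complete normed real vector space, T > 0, and let 0 < α ≤ 1 < β be real numbers. Let Ξ be a W-valued function on the simplex {(s,t) : 0 ≤ s ≤ t ≤ T} such that Ξ_{t,t} = 0 for all t, ‖Ξ_{s,t}‖ ≤ C₁·(t−s)^α for all s ≤ t, and ‖Ξ_{s,t} − Ξ_{s,u} − Ξ_{u,t}‖ ≤ C₂·(t−s)^β for all s ≤ u ≤ t. Then there exists a function I : [0,T] → W with I_0 = 0 and a constant K depending only on β such that ‖I_t − I_s − Ξ_{s,t}‖ ≤ K·C₂·(t−s)^β for all 0 ≤ s ≤ t ≤ T; moreover I is α-Hölder continuous, and I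 is the unique function with I_0 = 0 satisfying a bound of the form ‖I_t − I_s − Ξ_{s,t}‖ ≤ C₃·(t−s)^β for some constant C₃. -/
/-!
The approximants are the Riemann sums of `Ξ` along the dyadic grid of mesh `T / 2 ^ n`, clamped
at `t`. Refining the grid once changes them by `2 ^ n` coboundaries of size `C₂ (T / 2 ^ n) ^ β`,
so for `β > 1` they converge geometrically to some `I t`.

For `s < t`, the difference of the level-`n` sums at `t` and at `s` is a Riemann sum of `Ξ`
along a partition of `[s, t]`, plus a single coboundary coming from the grid cell containing `s`.
Young's point-removal argument bounds any Riemann sum along a partition of `[s, t]` against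
`Ξ s t` by `2 ^ β ζ(β) C₂ (t - s) ^ β`, uniformly in the partition, and the extra coboundary
vanishes as `n → ∞`. Hölder continuity follows from the triangle inequality.

Two such functions differ by a function whose increments are `O((t - s) ^ β)` with `β > 1`;
telescoping along finer and finer uniform partitions shows that it is constant.
-/

open Finset Filter Topology

section RiemannSum

variable {W : Type*} [AddCommGroup W]

def riemannSum (Ξ : ℝ → ℝ → W) (u : ℕ → ℝ) (M : ℕ) : W :=
  ∑ k ∈ range M, Ξ (u k) (u (k + 1))

lemma riemannSum_succ (Ξ : ℝ → ℝ → W) (u : ℕ → ℝ) (M : ℕ) :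
    riemannSum Ξ u (M + 1) = riemannSum Ξ u M + Ξ (u M) (u (M + 1)) :=
  sum_range_succ _ _

def skipSucc (j k : ℕ) : ℕ := if k ≤ j then k else k + 1

lemma monotone_skipSucc (j : ℕ) : Monotone (skipSucc j) := fun a b hab => by
  simp only [skipSucc]
  split_ifs <;> omega

lemma riemannSum_eq_riemannSum_skipSucc_sub (Ξ : ℝ → ℝ → W) (u : ℕ → ℝ) {j M : ℕ}
    (hj : j < M) :
    riemannSum Ξ u (M + 1) = riemannSum Ξ (u ∘ skipSucc j) M -
      (Ξ (u j) (u (j + 2)) - Ξ (u j) (u (j + 1)) - Ξ (u (j + 1)) (u (j + 2))) := by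
  induction M, hj using Nat.le_induction with
  | base =>
    have hlow : riemannSum Ξ (u ∘ skipSucc j) j = riemannSum Ξ u j :=
      sum_congr rfl fun k hk => by
        have hk := mem_range.1 hk
        simp [skipSucc, hk.le, Nat.succ_le_of_lt hk]
    rw [riemannSum_succ, riemannSum_succ, riemannSum_succ, hlow]
    simp only [Function.comp, skipSucc, le_refl, if_true, show ¬ j + 1 ≤ j by omega, if_false]
    abel
  | succ M hjM ih =>
    rw [riemannSum_succ, ih, riemannSum_succ]
    simp only [Function.comp, skipSucc, show ¬ M ≤ j by omega, show ¬ M + 1 ≤ j by omega,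
      if_false]
    abel

lemma riemannSum_two_mul_succ (Ξ : ℝ → ℝ → W) (u : ℕ → ℝ) (M : ℕ) :
    riemannSum Ξ u (2 * (M + 1)) - riemannSum Ξ (fun j => u (2 * j)) (M + 1) =
      riemannSum Ξ u (2 * M) - riemannSum Ξ (fun j => u (2 * j)) M -
        (Ξ (u (2 * M)) (u (2 * M + 2)) - Ξ (u (2 * M)) (u (2 * M + 1)) -
          Ξ (u (2 * M + 1)) (u (2 * M + 2))) := by
  rw [show 2 * (M + 1) = 2 * M + 1 + 1 by ring, riemannSum_succ, riemannSum_succ,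
    riemannSum_succ]
  simp only [show 2 * (M + 1) = 2 * M + 2 by ring]
  abel

end RiemannSum

lemma exists_sub_le_of_monotone {u : ℕ → ℝ} (hu : Monotone u) {M : ℕ} (hM : 0 < M) :
    ∃ j < M, u (j + 2) - u j ≤ 2 * (u (M + 1) - u 0) / M := by
  have htel : ∑ j ∈ range M, (u (j + 2) - u j) = (u (M + 1) - u 1) + (u M - u 0) := by
    rw [← sum_range_sub (fun k => u (k + 1)), ← sum_range_sub, ← sum_add_distrib]
    exact sum_congr rfl fun _ _ => by ring
  have h01 : u 0 ≤ u 1 := hu zero_le_one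
  have hM1 : u M ≤ u (M + 1) := hu M.le_succ
  obtain ⟨j, hj, hle⟩ := exists_le_of_sum_le (nonempty_range_iff.2 hM.ne')
    (f := fun j => u (j + 2) - u j) (g := fun _ => 2 * (u (M + 1) - u 0) / M) (by
      rw [htel, sum_const, card_range, nsmul_eq_mul, mul_div_cancel₀ _ (by positivity)]
      linarith)
  exact ⟨j, mem_range.1 hj, hle⟩

lemma div_two_pow_rpow {T : ℝ} (hT : 0 ≤ T) (β : ℝ) (n : ℕ) :
    (T / 2 ^ n) ^ β = T ^ β * ((2 : ℝ) ^ (-β)) ^ n := by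
  rw [Real.div_rpow hT (by positivity), ← Real.rpow_pow_comm zero_le_two,
    Real.rpow_neg (by positivity), inv_pow, div_eq_mul_inv]

/-- The `k = 0` term vanishes, since `(0 : ℝ) ^ (-β) = 0` for `β ≠ 0`. -/
noncomputable def sewingConst (β : ℝ) : ℝ := 2 ^ β * ∑' k : ℕ, (k : ℝ) ^ (-β)

lemma sewingConst_nonneg (β : ℝ) : 0 ≤ sewingConst β :=
  mul_nonneg (by positivity) (tsum_nonneg fun k => Real.rpow_nonneg k.cast_nonneg _)

section Sewing

variable {W : Type*} [NormedAddCommGroup W] {Ξ : ℝ → ℝ → W} {T C β : ℝ}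

def HasCoboundaryBound (Ξ : ℝ → ℝ → W) (T C β : ℝ) : Prop :=
  ∀ s u t : ℝ, 0 ≤ s → s ≤ u → u ≤ t → t ≤ T → ‖Ξ s t - Ξ s u - Ξ u t‖ ≤ C * (t - s) ^ β

lemma HasCoboundaryBound.nonneg (hδ : HasCoboundaryBound Ξ T C β) (hT : 0 < T)
    (hΞ : Ξ 0 0 = 0) : 0 ≤ C := by
  have h := hδ 0 0 T le_rfl le_rfl hT.le le_rfl
  rw [hΞ, sub_zero, sub_self, norm_zero] at h
  exact (mul_nonneg_iff_of_pos_right (Real.rpow_pos_of_pos (by linarith) β)).1 h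

lemma HasCoboundaryBound.norm_le_of_sub_le (hδ : HasCoboundaryBound Ξ T C β) (hC : 0 ≤ C)
    (hβ : 0 ≤ β) {s u t h : ℝ} (hs : 0 ≤ s) (hsu : s ≤ u) (hut : u ≤ t) (ht : t ≤ T)
    (hh : t - s ≤ h) : ‖Ξ s t - Ξ s u - Ξ u t‖ ≤ C * h ^ β :=
  (hδ s u t hs hsu hut ht).trans <| by
    gcongr
    linarith

/-- Young's maximal inequality. Some interior point `u (j + 1)` of a partition into `M + 1`
pieces has neighbours at distance at most `2 (u (M + 1) - u 0) / M`, so removing it costs at most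
`C (2 (u (M + 1) - u 0) / M) ^ β`; induction on `M` adds up these costs. -/
theorem norm_riemannSum_sub_le (hΞ : ∀ t ∈ Set.Icc 0 T, Ξ t t = 0)
    (hδ : HasCoboundaryBound Ξ T C β) (hC : 0 ≤ C) (hβ : 0 ≤ β) {M : ℕ} {u : ℕ → ℝ}
    (hu : Monotone u) (h0 : 0 ≤ u 0) (hT : u M ≤ T) :
    ‖riemannSum Ξ u M - Ξ (u 0) (u M)‖ ≤
      2 ^ β * C * (u M - u 0) ^ β * ∑ k ∈ range M, (k : ℝ) ^ (-β) := by
  induction M generalizing u with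
  | zero => simp [riemannSum, hΞ (u 0) ⟨h0, hT⟩]
  | succ M ih =>
    set L := u (M + 1) - u 0
    have hL : 0 ≤ L := sub_nonneg.2 (hu (Nat.zero_le _))
    rcases Nat.eq_zero_or_pos M with rfl | hM
    · have : 0 ≤ ∑ k ∈ range 1, (k : ℝ) ^ (-β) :=
        sum_nonneg fun k _ => Real.rpow_nonneg k.cast_nonneg _
      simp only [riemannSum, sum_range_one, zero_add, sub_self, norm_zero]
      positivity
    obtain ⟨j, hjM, hj⟩ := exists_sub_le_of_monotone hu hM
    have hv0 : (u ∘ skipSucc j) 0 = u 0 := by simp [skipSucc]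
    have hvM : (u ∘ skipSucc j) M = u (M + 1) := by simp [skipSucc, show ¬ M ≤ j by omega]
    have hrest := ih (hu.comp (monotone_skipSucc j)) (hv0 ▸ h0) (hvM ▸ hT)
    rw [hv0, hvM] at hrest
    have hremoved :
        ‖Ξ (u j) (u (j + 2)) - Ξ (u j) (u (j + 1)) - Ξ (u (j + 1)) (u (j + 2))‖ ≤
          2 ^ β * C * L ^ β * (M : ℝ) ^ (-β) := by
      have hM' : (0 : ℝ) < M := by exact_mod_cast hM
      have hcost : C * (2 * L / M) ^ β = 2 ^ β * C * L ^ β * (M : ℝ) ^ (-β) := by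
        rw [Real.div_rpow (by positivity) hM'.le, Real.mul_rpow zero_le_two hL,
          Real.rpow_neg hM'.le]
        ring
      rw [← hcost]
      exact hδ.norm_le_of_sub_le hC hβ (h0.trans (hu (Nat.zero_le _))) (hu j.le_succ)
        (hu (j + 1).le_succ) ((hu (by omega)).trans hT) hj
    rw [riemannSum_eq_riemannSum_skipSucc_sub Ξ u hjM, sum_range_succ, mul_add, sub_right_comm]
    exact (norm_sub_le _ _).trans (add_le_add hrest hremoved)

theorem norm_riemannSum_sub_le_sewingConst (hΞ : ∀ t ∈ Set.Icc 0 T, Ξ t t = 0)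
    (hδ : HasCoboundaryBound Ξ T C β) (hC : 0 ≤ C) (hβ : 1 < β) {M : ℕ} {u : ℕ → ℝ}
    (hu : Monotone u) (h0 : 0 ≤ u 0) (hT : u M ≤ T) :
    ‖riemannSum Ξ u M - Ξ (u 0) (u M)‖ ≤ sewingConst β * C * (u M - u 0) ^ β := by
  refine (norm_riemannSum_sub_le hΞ hδ hC (by linarith) hu h0 hT).trans ?_
  have hL : 0 ≤ (u M - u 0) ^ β := Real.rpow_nonneg (sub_nonneg.2 (hu (Nat.zero_le _))) _
  calc _ = 2 ^ β * (∑ k ∈ range M, (k : ℝ) ^ (-β)) * C * (u M - u 0) ^ β := by ring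
    _ ≤ sewingConst β * C * (u M - u 0) ^ β := by
      unfold sewingConst
      gcongr
      exact (Real.summable_nat_rpow.2 (neg_lt_neg hβ)).sum_le_tsum _
        fun k _ => Real.rpow_nonneg k.cast_nonneg _

theorem norm_riemannSum_two_mul_sub_le (hδ : HasCoboundaryBound Ξ T C β) (hC : 0 ≤ C)
    (hβ : 0 ≤ β) {u : ℕ → ℝ} (hu : Monotone u) (h0 : 0 ≤ u 0) {h : ℝ} {M : ℕ}
    (hT : u (2 * M) ≤ T) (hmesh : ∀ j < M, u (2 * j + 2) - u (2 * j) ≤ h) :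
    ‖riemannSum Ξ u (2 * M) - riemannSum Ξ (fun j => u (2 * j)) M‖ ≤ M * (C * h ^ β) := by
  induction M with
  | zero => simp [riemannSum]
  | succ M ih =>
    rw [riemannSum_two_mul_succ, Nat.cast_succ, add_one_mul]
    refine (norm_sub_le _ _).trans (add_le_add (ih ((hu (by omega)).trans hT)
      fun j hj => hmesh j (by omega)) ?_)
    exact hδ.norm_le_of_sub_le hC hβ (h0.trans (hu (Nat.zero_le _))) (hu (by omega))
      (hu (by omega)) ((hu (by omega)).trans hT) (hmesh M M.lt_succ_self)

noncomputable def dyadicSum (Ξ : ℝ → ℝ → W) (T : ℝ) (n : ℕ) (t : ℝ) : W :=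
  riemannSum Ξ (fun k => min t (k * T / 2 ^ n)) (2 ^ n)

lemma monotone_dyadic (hT : 0 ≤ T) (n : ℕ) : Monotone fun k : ℕ => (k : ℝ) * T / 2 ^ n :=
  fun a b hab => by dsimp only; gcongr

theorem dist_dyadicSum_succ_le (hT : 0 ≤ T) (hδ : HasCoboundaryBound Ξ T C β) (hC : 0 ≤ C)
    (hβ : 0 ≤ β) {t : ℝ} (ht : t ∈ Set.Icc 0 T) (n : ℕ) :
    dist (dyadicSum Ξ T n t) (dyadicSum Ξ T (n + 1) t) ≤ C * T ^ β * ((2 : ℝ) ^ (1 - β)) ^ n := by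
  set u : ℕ → ℝ := fun k => min t (k * T / 2 ^ (n + 1))
  have hcoarse : dyadicSum Ξ T n t = riemannSum Ξ (fun j => u (2 * j)) (2 ^ n) := by
    simp only [dyadicSum, u, pow_succ, Nat.cast_mul, Nat.cast_ofNat]
    congr! 3 with j
    field_simp
  have hfine : dyadicSum Ξ T (n + 1) t = riemannSum Ξ u (2 * 2 ^ n) := by
    rw [dyadicSum, ← pow_succ']
  have hmesh : ∀ j < 2 ^ n, u (2 * j + 2) - u (2 * j) ≤ T / 2 ^ n := fun j _ => by
    refine (le_abs_self _).trans ((abs_min_sub_min_le_max _ _ _ _).trans ?_)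
    have hstep : ((2 * j + 2 : ℕ) : ℝ) * T / 2 ^ (n + 1) - ((2 * j : ℕ) : ℝ) * T / 2 ^ (n + 1) =
        T / 2 ^ n := by
      push_cast
      field_simp
      ring
    rw [sub_self, abs_zero, hstep, abs_of_nonneg (by positivity), max_eq_right (by positivity)]
  have hu : Monotone u := fun a b hab => min_le_min le_rfl (monotone_dyadic hT _ hab)
  rw [dist_comm, dist_eq_norm, hcoarse, hfine]
  refine (norm_riemannSum_two_mul_sub_le hδ hC hβ hu (le_min ht.1 (by positivity))
    ((min_le_left _ _).trans ht.2) hmesh).trans (le_of_eq ?_)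
  rw [div_two_pow_rpow hT, sub_eq_add_neg, Real.rpow_add two_pos, Real.rpow_one, mul_pow]
  push_cast
  ring

noncomputable def sewing (Ξ : ℝ → ℝ → W) (T t : ℝ) : W :=
  limUnder atTop fun n => dyadicSum Ξ T n t

lemma sewing_zero (hT : 0 ≤ T) (hΞ : Ξ 0 0 = 0) : sewing Ξ T 0 = 0 := by
  have h : ∀ n, dyadicSum Ξ T n 0 = 0 := fun n => by
    unfold dyadicSum riemannSum
    refine sum_eq_zero fun k _ => ?_
    dsimp only
    rw [min_eq_left (by positivity), min_eq_left (by positivity), hΞ]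
  simp only [sewing, h]
  exact tendsto_const_nhds.limUnder_eq

theorem tendsto_dyadicSum_sewing [CompleteSpace W] (hT : 0 ≤ T)
    (hδ : HasCoboundaryBound Ξ T C β) (hC : 0 ≤ C) (hβ : 1 < β) {t : ℝ} (ht : t ∈ Set.Icc 0 T) :
    Tendsto (fun n => dyadicSum Ξ T n t) atTop (𝓝 (sewing Ξ T t)) :=
  (cauchySeq_of_le_geometric _ _ (Real.rpow_lt_one_of_one_lt_of_neg one_lt_two (by linarith))
    (dist_dyadicSum_succ_le hT hδ hC (by linarith) ht)).tendsto_limUnder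

lemma exists_dyadic_le_lt (hT : 0 < T) {s : ℝ} (hs : 0 ≤ s) (hsT : s < T) (n : ℕ) :
    ∃ k : ℕ, k < 2 ^ n ∧ (k : ℝ) * T / 2 ^ n ≤ s ∧ s < ((k + 1 : ℕ) : ℝ) * T / 2 ^ n := by
  have hx : 0 ≤ s * 2 ^ n / T := by positivity
  refine ⟨⌊s * 2 ^ n / T⌋₊, ?_, ?_, ?_⟩
  · rw [Nat.floor_lt hx, div_lt_iff₀ hT]
    push_cast
    nlinarith [pow_pos (two_pos : (0 : ℝ) < 2) n]
  · rw [div_le_iff₀ (by positivity), ← le_div_iff₀ hT]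
    exact Nat.floor_le hx
  · rw [lt_div_iff₀ (by positivity), ← div_lt_iff₀ hT]
    push_cast
    exact Nat.lt_floor_add_one _

/-- The part of the cell `[a, b]` lying in `[0, t]` minus the parts in `[0, s]` and `[s, t]`. -/
def clampDefect (Ξ : ℝ → ℝ → W) (s t a b : ℝ) : W :=
  Ξ (min t a) (min t b) - Ξ (min s a) (min s b) - Ξ (max s (min t a)) (max s (min t b))

lemma clampDefect_eq_zero {s t a b : ℝ} (hΞ : Ξ s s = 0) (hst : s ≤ t) (hab : a ≤ b)
    (h : b ≤ s ∨ s ≤ a) : clampDefect Ξ s t a b = 0 := by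
  rcases h with hbs | hsa
  · rw [clampDefect, min_eq_right (hab.trans (hbs.trans hst)), min_eq_right (hbs.trans hst),
      min_eq_right (hab.trans hbs), min_eq_right hbs, max_eq_left (hab.trans hbs),
      max_eq_left hbs, hΞ, sub_self, sub_zero]
  · rw [clampDefect, min_eq_left hsa, min_eq_left (hsa.trans hab),
      max_eq_right (le_min hst hsa), max_eq_right (le_min hst (hsa.trans hab)), hΞ, sub_zero,
      sub_self]

lemma norm_clampDefect_le (hδ : HasCoboundaryBound Ξ T C β) (hC : 0 ≤ C) (hβ : 0 ≤ β)
    {s t a b : ℝ} (ha : 0 ≤ a) (has : a ≤ s) (hsb : s ≤ b) (hst : s ≤ t) (ht : t ≤ T) :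
    ‖clampDefect Ξ s t a b‖ ≤ C * (b - a) ^ β := by
  rw [clampDefect, min_eq_right (has.trans hst), min_eq_right has, min_eq_left hsb,
    max_eq_left has, max_eq_right (le_min hst hsb)]
  exact hδ.norm_le_of_sub_le hC hβ ha has (le_min hst hsb) ((min_le_left _ _).trans ht)
    (by linarith [min_le_right t b])

theorem norm_dyadicSum_sub_sub_le (hT : 0 < T) (hΞ : ∀ t ∈ Set.Icc 0 T, Ξ t t = 0)
    (hδ : HasCoboundaryBound Ξ T C β) (hC : 0 ≤ C) (hβ : 1 < β) {s t : ℝ} (hs : 0 ≤ s)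
    (hst : s < t) (ht : t ≤ T) (n : ℕ) :
    ‖dyadicSum Ξ T n t - dyadicSum Ξ T n s - Ξ s t‖ ≤
      sewingConst β * C * (t - s) ^ β + C * (T / 2 ^ n) ^ β := by
  set g : ℕ → ℝ := fun k => k * T / 2 ^ n
  set v : ℕ → ℝ := fun k => max s (min t (g k))
  have hg : Monotone g := monotone_dyadic hT.le n
  have hv : Monotone v := fun a b hab => max_le_max le_rfl (min_le_min le_rfl (hg hab))
  have hv0 : v 0 = s := by simp [v, g, hs, hs.trans hst.le]
  have hvN : v (2 ^ n) = t := by simp [v, g, ht, hst.le]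
  have hyoung := norm_riemannSum_sub_le_sewingConst hΞ hδ hC hβ hv (hv0 ▸ hs) (hvN ▸ ht)
  rw [hv0, hvN] at hyoung
  obtain ⟨k₀, hk₀, hgs, hsg⟩ := exists_dyadic_le_lt hT hs (hst.trans_le ht) n
  have hΞs : Ξ s s = 0 := hΞ s ⟨hs, hst.le.trans ht⟩
  have hsplit : dyadicSum Ξ T n t - dyadicSum Ξ T n s =
      riemannSum Ξ v (2 ^ n) + clampDefect Ξ s t (g k₀) (g (k₀ + 1)) := by
    rw [← sum_eq_single_of_mem k₀ (mem_range.2 hk₀) fun k _ hk =>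
      clampDefect_eq_zero hΞs hst.le (hg k.le_succ) (by
        rcases hk.lt_or_gt with hk | hk
        · exact .inl ((hg hk).trans hgs)
        · exact .inr (hsg.le.trans (hg hk)))]
    simp only [dyadicSum, riemannSum, clampDefect, ← sum_sub_distrib, ← sum_add_distrib]
    exact sum_congr rfl fun k _ => by abel
  have hdefect : ‖clampDefect Ξ s t (g k₀) (g (k₀ + 1))‖ ≤ C * (T / 2 ^ n) ^ β := by
    refine (norm_clampDefect_le hδ hC (by linarith) (by positivity) hgs hsg.le hst.le ht).trans
      (le_of_eq ?_)
    congr 2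
    push_cast
    ring
  rw [hsplit, add_sub_right_comm]
  exact (norm_add_le _ _).trans (add_le_add hyoung hdefect)

theorem norm_sewing_sub_sub_le [CompleteSpace W] (hT : 0 < T)
    (hΞ : ∀ t ∈ Set.Icc 0 T, Ξ t t = 0) (hδ : HasCoboundaryBound Ξ T C β) (hC : 0 ≤ C)
    (hβ : 1 < β) {s t : ℝ} (hs : 0 ≤ s) (hst : s ≤ t) (ht : t ≤ T) :
    ‖sewing Ξ T t - sewing Ξ T s - Ξ s t‖ ≤ sewingConst β * C * (t - s) ^ β := by
  rcases hst.eq_or_lt with rfl | hst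
  · rw [sub_self, zero_sub, norm_neg, hΞ s ⟨hs, ht⟩, norm_zero]
    exact mul_nonneg (mul_nonneg (sewingConst_nonneg β) hC) (Real.rpow_nonneg (sub_self s).ge _)
  have hlim : Tendsto (fun n : ℕ => sewingConst β * C * (t - s) ^ β + C * (T / 2 ^ n) ^ β)
      atTop (𝓝 (sewingConst β * C * (t - s) ^ β)) := by
    simp_rw [div_two_pow_rpow hT.le]
    have hgeom := ((tendsto_pow_atTop_nhds_zero_of_lt_one (Real.rpow_nonneg zero_le_two (-β))
      (Real.rpow_lt_one_of_one_lt_of_neg one_lt_two (by linarith))).const_mul (T ^ β)).const_mul C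
    simpa using (tendsto_const_nhds (x := sewingConst β * C * (t - s) ^ β)).add hgeom
  have hconv : ∀ x ∈ Set.Icc 0 T,
      Tendsto (fun n => dyadicSum Ξ T n x) atTop (𝓝 (sewing Ξ T x)) := fun x hx =>
    tendsto_dyadicSum_sewing hT.le hδ hC hβ hx
  refine le_of_tendsto_of_tendsto' ?_ hlim (norm_dyadicSum_sub_sub_le hT hΞ hδ hC hβ hs hst ht)
  exact (((hconv t ⟨hs.trans hst.le, ht⟩).sub (hconv s ⟨hs, hst.le.trans ht⟩)).sub
    tendsto_const_nhds).norm

theorem norm_sub_le_of_norm_sub_sub_le {I : ℝ → W} {A C₁ α : ℝ} (hA : 0 ≤ A) (hαβ : α ≤ β)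
    (hβ : β ≠ 0) (hI : ∀ s t, 0 ≤ s → s ≤ t → t ≤ T → ‖I t - I s - Ξ s t‖ ≤ A * (t - s) ^ β)
    (hΞα : ∀ s t, 0 ≤ s → s ≤ t → t ≤ T → ‖Ξ s t‖ ≤ C₁ * (t - s) ^ α) {s t : ℝ} (hs : 0 ≤ s)
    (hst : s ≤ t) (ht : t ≤ T) : ‖I t - I s‖ ≤ (C₁ + A * T ^ (β - α)) * (t - s) ^ α := by
  have hsplit : (t - s) ^ β = (t - s) ^ (β - α) * (t - s) ^ α := by
    rw [← Real.rpow_add' (sub_nonneg.2 hst) (by simpa using hβ), sub_add_cancel]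
  have hshort : (t - s) ^ (β - α) ≤ T ^ (β - α) :=
    Real.rpow_le_rpow (sub_nonneg.2 hst) (by linarith) (sub_nonneg.2 hαβ)
  calc ‖I t - I s‖ ≤ ‖Ξ s t‖ + ‖I t - I s - Ξ s t‖ := norm_le_norm_add_norm_sub' _ _
    _ ≤ C₁ * (t - s) ^ α + A * ((t - s) ^ (β - α) * (t - s) ^ α) := by
      rw [← hsplit]
      exact add_le_add (hΞα s t hs hst ht) (hI s t hs hst ht)
    _ ≤ C₁ * (t - s) ^ α + A * (T ^ (β - α) * (t - s) ^ α) := by gcongr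
    _ = (C₁ + A * T ^ (β - α)) * (t - s) ^ α := by ring

end Sewing

section Uniqueness

variable {W : Type*} [NormedAddCommGroup W] {T β : ℝ}

theorem norm_sub_le_of_norm_sub_le_rpow {D : ℝ → W} {c : ℝ}
    (hD : ∀ s t, 0 ≤ s → s ≤ t → t ≤ T → ‖D t - D s‖ ≤ c * (t - s) ^ β) {t : ℝ} (ht0 : 0 ≤ t)
    (htT : t ≤ T) (n : ℕ) : ‖D t - D 0‖ ≤ c * t ^ β * ((n : ℝ) + 1) ^ (1 - β) := by
  have hn : (0 : ℝ) < n + 1 := by positivity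
  set x : ℕ → ℝ := fun k => t * k / (n + 1)
  have hx : ∀ k ≤ n, 0 ≤ x k ∧ x k ≤ x (k + 1) ∧ x (k + 1) ≤ T := fun k hk => by
    have hk' : ((k + 1 : ℕ) : ℝ) ≤ n + 1 := by exact_mod_cast Nat.succ_le_succ hk
    refine ⟨by positivity, ?_, ?_⟩
    · show t * k / (n + 1) ≤ t * ((k + 1 : ℕ) : ℝ) / (n + 1)
      gcongr
      simp
    refine le_trans ?_ htT
    rw [div_le_iff₀ hn]
    exact mul_le_mul_of_nonneg_left hk' ht0
  calc ‖D t - D 0‖ = dist (D (x 0)) (D (x (n + 1))) := by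
        rw [dist_comm, dist_eq_norm]
        simp [x, hn.ne']
    _ ≤ ∑ k ∈ range (n + 1), dist (D (x k)) (D (x (k + 1))) :=
        dist_le_range_sum_dist (fun k => D (x k)) (n + 1)
    _ ≤ ∑ k ∈ range (n + 1), c * (t / (n + 1)) ^ β := sum_le_sum fun k hk => by
        obtain ⟨h0, hmono, hT⟩ := hx k (Nat.lt_succ_iff.1 (mem_range.1 hk))
        rw [dist_comm, dist_eq_norm]
        refine (hD _ _ h0 hmono hT).trans_eq ?_
        congr 2
        simp only [x]
        push_cast
        field_simp
        ring
    _ = c * t ^ β * ((n : ℝ) + 1) ^ (1 - β) := by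
        rw [sum_const, card_range, nsmul_eq_mul, Real.div_rpow ht0 hn.le, Real.rpow_sub hn,
          Real.rpow_one]
        push_cast
        field_simp

theorem eq_zero_of_norm_sub_le_rpow {D : ℝ → W} {c : ℝ} (hβ : 1 < β) (hD0 : D 0 = 0)
    (hD : ∀ s t, 0 ≤ s → s ≤ t → t ≤ T → ‖D t - D s‖ ≤ c * (t - s) ^ β) {t : ℝ}
    (ht : t ∈ Set.Icc 0 T) : D t = 0 := by
  have hlim : Tendsto (fun n : ℕ => c * t ^ β * ((n : ℝ) + 1) ^ (1 - β)) atTop (𝓝 0) := by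
    have h := ((tendsto_rpow_neg_atTop (by linarith : 0 < β - 1)).comp
      (tendsto_atTop_add_const_right _ 1 tendsto_natCast_atTop_atTop)).const_mul (c * t ^ β)
    rwa [mul_zero, neg_sub] at h
  have hbound := norm_sub_le_of_norm_sub_le_rpow hD ht.1 ht.2
  rw [hD0, sub_zero] at hbound
  exact norm_le_zero_iff.1 (ge_of_tendsto' hlim hbound)

theorem eq_of_norm_sub_sub_le {Ξ : ℝ → ℝ → W} {I J : ℝ → W} {A B : ℝ} (hβ : 1 < β)
    (h0 : J 0 = I 0)
    (hI : ∀ s t, 0 ≤ s → s ≤ t → t ≤ T → ‖I t - I s - Ξ s t‖ ≤ A * (t - s) ^ β)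
    (hJ : ∀ s t, 0 ≤ s → s ≤ t → t ≤ T → ‖J t - J s - Ξ s t‖ ≤ B * (t - s) ^ β) {t : ℝ}
    (ht : t ∈ Set.Icc 0 T) : J t = I t := by
  refine sub_eq_zero.1 (eq_zero_of_norm_sub_le_rpow (D := fun x => J x - I x) (c := B + A) hβ
    (sub_eq_zero.2 h0) (fun s t hs hst ht => ?_) ht)
  calc ‖J t - I t - (J s - I s)‖ = ‖(J t - J s - Ξ s t) - (I t - I s - Ξ s t)‖ := by
        congr 1; abel
    _ ≤ B * (t - s) ^ β + A * (t - s) ^ β :=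
        (norm_sub_le _ _).trans (add_le_add (hJ s t hs hst ht) (hI s t hs hst ht))
    _ = (B + A) * (t - s) ^ β := by ring

end Uniqueness

theorem sewing_lemma_general (T α β : ℝ) (hT : 0 < T) (hα1 : α ≤ 1) (hβ : 1 < β) :
    ∃ K : ℝ, ∀ (W : Type) [NormedAddCommGroup W] [NormedSpace ℝ W] [CompleteSpace W]
      (Ξ : ℝ → ℝ → W) (C₁ C₂ : ℝ),
      (∀ t ∈ Set.Icc (0 : ℝ) T, Ξ t t = 0) →
      (∀ s t : ℝ, 0 ≤ s → s ≤ t → t ≤ T → ‖Ξ s t‖ ≤ C₁ * (t - s) ^ α) →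
      (∀ s u t : ℝ, 0 ≤ s → s ≤ u → u ≤ t → t ≤ T →
        ‖Ξ s t - Ξ s u - Ξ u t‖ ≤ C₂ * (t - s) ^ β) →
      ∃ I : ℝ → W, I 0 = 0 ∧
        (∀ s t : ℝ, 0 ≤ s → s ≤ t → t ≤ T →
          ‖I t - I s - Ξ s t‖ ≤ K * C₂ * (t - s) ^ β) ∧
        (∃ L : ℝ, ∀ s t : ℝ, 0 ≤ s → s ≤ t → t ≤ T →
          ‖I t - I s‖ ≤ L * (t - s) ^ α) ∧
        (∀ J : ℝ → W, J 0 = 0 →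
          (∃ C₃ : ℝ, ∀ s t : ℝ, 0 ≤ s → s ≤ t → t ≤ T →
            ‖J t - J s - Ξ s t‖ ≤ C₃ * (t - s) ^ β) →
          ∀ t ∈ Set.Icc (0 : ℝ) T, J t = I t) := by
  refine ⟨sewingConst β, fun W _ _ _ Ξ C₁ C₂ hΞ hΞα hδ => ?_⟩
  have hC₂ : 0 ≤ C₂ := HasCoboundaryBound.nonneg hδ hT (hΞ 0 ⟨le_rfl, hT.le⟩)
  have hI0 : sewing Ξ T 0 = 0 := sewing_zero hT.le (hΞ 0 ⟨le_rfl, hT.le⟩)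
  have hI : ∀ s t : ℝ, 0 ≤ s → s ≤ t → t ≤ T →
      ‖sewing Ξ T t - sewing Ξ T s - Ξ s t‖ ≤ sewingConst β * C₂ * (t - s) ^ β :=
    fun s t hs hst ht => norm_sewing_sub_sub_le hT hΞ hδ hC₂ hβ hs hst ht
  refine ⟨sewing Ξ T, hI0, hI, ⟨_, fun s t hs hst ht =>
    norm_sub_le_of_norm_sub_sub_le (mul_nonneg (sewingConst_nonneg β) hC₂) (hα1.trans hβ.le)
      (by linarith) hI hΞα hs hst ht⟩, ?_⟩
  rintro J hJ0 ⟨C₃, hJ⟩ t ht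
  exact eq_of_norm_sub_sub_le hβ (hJ0.trans hI0.symm) hI hJ ht

/-- the sewing lemma.  For `0 < α ≤ 1 < β` there is a constant `K`
depending only on `β` such that: for every complete normed real vector space
`W` and every `Ξ` on the simplex of `[0,T]` with `Ξ_{t,t} = 0`,
`‖Ξ_{s,t}‖ ≤ C₁ (t−s)^α` and `‖Ξ_{s,t} − Ξ_{s,u} − Ξ_{u,t}‖ ≤ C₂ (t−s)^β`,
there is a function `I : [0,T] → W` with `I_0 = 0` and
`‖I_t − I_s − Ξ_{s,t}‖ ≤ K C₂ (t−s)^β`; moreover `I` is `α`-Hölder and is the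
unique such function with `I_0 = 0` admitting a bound of this form. -/
theorem sewing_lemma (T α β : ℝ) (hT : 0 < T) (hα0 : 0 < α) (hα1 : α ≤ 1) (hβ : 1 < β) :
    ∃ K : ℝ, ∀ (W : Type) [NormedAddCommGroup W] [NormedSpace ℝ W] [CompleteSpace W]
      (Ξ : ℝ → ℝ → W) (C₁ C₂ : ℝ),
      (∀ t ∈ Set.Icc (0 : ℝ) T, Ξ t t = 0) →
      (∀ s t : ℝ, 0 ≤ s → s ≤ t → t ≤ T → ‖Ξ s t‖ ≤ C₁ * (t - s) ^ α) →
      (∀ s u t : ℝ, 0 ≤ s → s ≤ u → u ≤ t → t ≤ T →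
        ‖Ξ s t - Ξ s u - Ξ u t‖ ≤ C₂ * (t - s) ^ β) →
      ∃ I : ℝ → W, I 0 = 0 ∧
        (∀ s t : ℝ, 0 ≤ s → s ≤ t → t ≤ T →
          ‖I t - I s - Ξ s t‖ ≤ K * C₂ * (t - s) ^ β) ∧
        (∃ L : ℝ, ∀ s t : ℝ, 0 ≤ s → s ≤ t → t ≤ T →
          ‖I t - I s‖ ≤ L * (t - s) ^ α) ∧
        (∀ J : ℝ → W, J 0 = 0 →
          (∃ C₃ : ℝ, ∀ s t : ℝ, 0 ≤ s → s ≤ t → t ≤ T →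
            ‖J t - J s - Ξ s t‖ ≤ C₃ * (t - s) ^ β) →
          ∀ t ∈ Set.Icc (0 : ℝ) T, J t = I t) :=
  sewing_lemma_general T α β hT hα1 hβ
end
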